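/- arXiv:2111.09345 — 11 statements merged into one kernel-verified Lean document; each statement's English description precedes it below -/
import Mathlib

section
/- Let η_k = 3^{-(k-1)} for k ≥ 1. Then the orbit closure T_η equals the set of all α ∈ ∏_{k=1}^∞ ℝ/ℤ satisfying 3·α_{k+1} = α_k in ℝ/ℤ for every k ≥ 1. -/
lemma coe_nsmul_addCircle (n : ℕ) (a : ℝ) :
    (((n : ℝ) * a : ℝ) : AddCircle (1 : ℝ)) = n • (a : AddCircle (1 : ℝ)) := by
  rw [← nsmul_eq_mul]
  exact map_nsmul (QuotientAddGroup.mk' (AddSubgroup.zmultiples (1:ℝ))) n a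

lemma pow_smul_rel {α : ℕ → AddCircle (1 : ℝ)}
    (hα : ∀ k : ℕ, (3 : ℕ) • α (k + 1) = α k) :
    ∀ m k : ℕ, (3 ^ m : ℕ) • α (k + m) = α k := by
  intro m
  induction m with
  | zero => intro k; simp
  | succ m ih =>
    intro k
    have : (3 ^ (m + 1) : ℕ) • α (k + (m + 1)) = (3 ^ m : ℕ) • ((3 : ℕ) • α (k + m + 1)) := by
      rw [← mul_smul, pow_succ]
      ring_nf
    rw [this, hα (k + m), ih k]

/-- Let `η_k = 3^{-(k-1)}` for `k ≥ 1` (here indexed by `k : ℕ` with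
`η = 3^{-k}`).  The orbit closure `T_η` of `{(η_k x mod 1)_k : x ∈ ℝ}` in the compact
abelian group `∏_{k} ℝ/ℤ` equals the set of all `α` with `3·α_{k+1} = α_k` for all `k`. -/
theorem stmt_0 :
    closure (Set.range (fun x : ℝ =>
        (fun k : ℕ => (((3 : ℝ) ^ (-(k : ℤ)) * x : ℝ) : AddCircle (1 : ℝ)))))
      = {α : ℕ → AddCircle (1 : ℝ) | ∀ k : ℕ, (3 : ℕ) • α (k + 1) = α k} := by
  apply Set.Subset.antisymm
  · -- closure ⊆ S
    apply closure_minimal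
    · rintro _ ⟨x, rfl⟩ k
      simp only
      rw [← coe_nsmul_addCircle 3]
      congr 1
      push_cast
      rw [← mul_assoc]
      congr 1
      rw [show (-((k:ℤ)+1)) = -(k:ℤ) + (-1) from by ring,
        zpow_add₀ (by norm_num : (3:ℝ) ≠ 0), zpow_neg_one]
      field_simp
    · have : {α : ℕ → AddCircle (1 : ℝ) | ∀ k : ℕ, (3 : ℕ) • α (k + 1) = α k}
          = ⋂ k : ℕ, {α : ℕ → AddCircle (1 : ℝ) | (3 : ℕ) • α (k + 1) = α k} := by
        ext α; simp [Set.mem_iInter]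
      rw [this]
      exact isClosed_iInter fun k => isClosed_eq
        (by continuity) (continuous_apply k)
  · -- S ⊆ closure
    intro α hα
    -- lift α N to ℝ
    choose a ha using fun N => QuotientAddGroup.mk_surjective (α N)
    set f : ℕ → ℕ → AddCircle (1 : ℝ) :=
      fun N => (fun x : ℝ =>
        (fun k : ℕ => (((3 : ℝ) ^ (-(k : ℤ)) * x : ℝ) : AddCircle (1 : ℝ)))) ((3 : ℝ) ^ N * a N)
      with hf
    have hmem : ∀ N, f N ∈ Set.range (fun x : ℝ =>
        (fun k : ℕ => (((3 : ℝ) ^ (-(k : ℤ)) * x : ℝ) : AddCircle (1 : ℝ)))) :=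
      fun N => ⟨(3 : ℝ) ^ N * a N, rfl⟩
    have key : ∀ N k : ℕ, k ≤ N → f N k = α k := by
      intro N k hk
      have h1 : (3 : ℝ) ^ (-(k : ℤ)) * ((3 : ℝ) ^ N * a N) = ((3 : ℕ) ^ (N - k) : ℕ) * a N := by
        push_cast
        rw [← mul_assoc]
        congr 1
        rw [← zpow_natCast (3 : ℝ) N, ← zpow_add₀ (by norm_num : (3:ℝ) ≠ 0),
          ← zpow_natCast (3 : ℝ) (N - k)]
        congr 1
        omega
      show (((3 : ℝ) ^ (-(k : ℤ)) * ((3 : ℝ) ^ N * a N) : ℝ) : AddCircle (1:ℝ)) = α k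
      rw [h1, coe_nsmul_addCircle, ha N]
      have := pow_smul_rel hα (N - k) k
      rwa [Nat.add_sub_cancel' hk] at this
    have htend : Filter.Tendsto f Filter.atTop (nhds α) := by
      rw [tendsto_pi_nhds]
      intro k
      apply Filter.Tendsto.congr' _ (tendsto_const_nhds (x := α k))
      filter_upwards [Filter.eventually_ge_atTop k] with N hN
      exact (key N k hN).symm
    exact mem_closure_of_tendsto htend (Filter.Eventually.of_forall hmem)
end

section
/- Let η_k = 3^{-(k-1)} for k ≥ 1. There exists β ∈ ∏_{k=1}^∞ ℝ/ℤ such that T_η(β) ∩ Ξ⁰ = ∅; that is, for every α ∈ T_η the sequence (β_k + α_k)_{k≥1} does not converge to 0 in ℝ/ℤ. -/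
/-!
On the orbit closure `T_η` every point satisfies `α k = 3 • α (k + 1)`, since this closed
condition holds on the orbit itself. Take `β` constantly `1/4`. If `β + α → 0`, then `α k → -1/4`,
so `α k = 3 • α (k + 1) → -3/4` as well, forcing `1/2 = 0` in `ℝ/ℤ`.
-/

open Filter Topology

theorem AddCircle.eq_nsmul_succ_of_mem_closure_range {p : ℝ} {η : ℕ → ℝ} {n : ℕ}
    (hη : ∀ k, η k = n * η (k + 1)) {α : ℕ → AddCircle p}
    (hα : α ∈ closure (Set.range fun x : ℝ => fun k => ((η k * x : ℝ) : AddCircle p))) (k : ℕ) :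
    α k = n • α (k + 1) := by
  have hclosed : IsClosed {a : ℕ → AddCircle p | a k = n • a (k + 1)} :=
    isClosed_eq (continuous_apply k) ((continuous_apply (k + 1)).nsmul n)
  refine closure_minimal ?_ hclosed hα
  rintro _ ⟨x, rfl⟩
  simp only [Set.mem_ofPred_eq, ← AddCircle.coe_nsmul, nsmul_eq_mul, hη k, mul_assoc]

theorem not_tendsto_const_add_of_eq_nsmul_succ {G : Type*} [AddCommGroup G] [TopologicalSpace G]
    [IsTopologicalAddGroup G] [T2Space G] {α : ℕ → G} {n : ℕ} (hα : ∀ k, α k = n • α (k + 1))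
    {c : G} (hc : n • c ≠ c) : ¬ Tendsto (fun k => c + α k) atTop (𝓝 0) := by
  intro h
  have hlim : Tendsto α atTop (𝓝 (-c)) :=
    (tendsto_const_add_iff c).mp (by rwa [add_neg_cancel])
  have hlim' : Tendsto α atTop (𝓝 (n • -c)) := by
    have := (hlim.comp (tendsto_add_atTop_nat 1)).nsmul n
    simpa only [Function.comp_apply, ← hα] using this
  exact hc (neg_injective (by rw [← smul_neg]; exact tendsto_nhds_unique hlim' hlim))

theorem AddCircle.three_nsmul_quarter_ne :
    (3 : ℕ) • ((1 / 4 : ℝ) : AddCircle (1 : ℝ)) ≠ ((1 / 4 : ℝ) : AddCircle (1 : ℝ)) := by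
  rw [← AddCircle.coe_nsmul, Ne, AddCircle.coe_eq_coe_iff_of_mem_Ico (a := 0)] <;>
    norm_num [Set.mem_Ico]

/-- For `η_k = 3^{-(k-1)}` (indexed by `k : ℕ`, `η = 3^{-k}`), there exists
`β ∈ ∏_k ℝ/ℤ` such that `T_η(β) ∩ Ξ⁰ = ∅`: for every `α` in the orbit closure `T_η`,
the sequence `(β_k + α_k)` does not converge to `0` in `ℝ/ℤ`. -/
theorem stmt_1 :
    ∃ β : ℕ → AddCircle (1 : ℝ),
      ∀ α ∈ closure (Set.range (fun x : ℝ =>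
          (fun k : ℕ => (((3 : ℝ) ^ (-(k : ℤ)) * x : ℝ) : AddCircle (1 : ℝ))))),
        ¬ Filter.Tendsto (fun k : ℕ => β k + α k) Filter.atTop
            (nhds (0 : AddCircle (1 : ℝ))) := by
  refine ⟨fun _ => ((1 / 4 : ℝ) : AddCircle (1 : ℝ)), fun α hα => ?_⟩
  have hη : ∀ k : ℕ, (3 : ℝ) ^ (-(k : ℤ)) = ((3 : ℕ) : ℝ) * (3 : ℝ) ^ (-((k + 1 : ℕ) : ℤ)) := by
    intro k
    simp only [zpow_neg, zpow_natCast, pow_succ]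
    field_simp
    norm_num
  exact not_tendsto_const_add_of_eq_nsmul_succ
    (AddCircle.eq_nsmul_succ_of_mem_closure_range hη hα) AddCircle.three_nsmul_quarter_ne
end

section
/- Let η_k = 1/k for k ≥ 1. Then the orbit closure T_η equals the set of all α ∈ ∏_{k=1}^∞ ℝ/ℤ satisfying k·α_{km} = α_m in ℝ/ℤ for all integers k, m ≥ 1 (so T_η is the universal solenoid, the inverse limit of the circles ℝ/ℤ under the multiplication maps). -/
/-- Let `η_k = 1/k` for `k ≥ 1` (indexed by `k : ℕ+`).  The orbit closure
`T_η` of `{(x/k mod 1)_k : x ∈ ℝ}` in `∏_{k≥1} ℝ/ℤ` equals the set of all `α` with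
`k·α_{km} = α_m` for all `k, m ≥ 1` (the universal solenoid). -/
theorem stmt_2 :
    closure (Set.range (fun x : ℝ =>
        (fun k : ℕ+ => ((x / (k : ℝ) : ℝ) : AddCircle (1 : ℝ)))))
      = {α : ℕ+ → AddCircle (1 : ℝ) | ∀ k m : ℕ+, (k : ℕ) • α (k * m) = α m} := by
  apply Set.Subset.antisymm
  · apply closure_minimal
    · rintro _ ⟨x, rfl⟩ k m
      simp only
      have h1 : ((k : ℕ) : ℝ) * (x / ((k * m : ℕ+) : ℝ)) = x / (m : ℝ) := by
        have hk : ((k : ℕ) : ℝ) ≠ 0 := by exact_mod_cast k.ne_zero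
        have hm : ((m : ℕ+) : ℝ) ≠ 0 := by exact_mod_cast m.ne_zero
        push_cast
        field_simp
      calc (k : ℕ) • (((x / ((k * m : ℕ+) : ℝ) : ℝ)) : AddCircle (1 : ℝ))
          = ((((k : ℕ) : ℝ) * (x / ((k * m : ℕ+) : ℝ)) : ℝ) : AddCircle (1 : ℝ)) := by
              rw [← nsmul_eq_mul]; rfl
        _ = ((x / (m : ℝ) : ℝ) : AddCircle (1 : ℝ)) := by rw [h1]
    · simp_rw [Set.setOf_forall]
      refine isClosed_iInter fun k => isClosed_iInter fun m => ?_
      exact isClosed_eq ((continuous_apply (k * m)).nsmul _) (continuous_apply m)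
  · intro α hα
    -- choose lifts of α
    choose y hy using fun n : ℕ+ => QuotientAddGroup.mk_surjective (α n)
    set N : ℕ → ℕ+ := fun n => ⟨(n + 1).factorial, (n + 1).factorial_pos⟩ with hN
    set x : ℕ → ℝ := fun n => ((N n : ℕ) : ℝ) * y (N n) with hx
    have key : ∀ k : ℕ+, ∀ n : ℕ, (k : ℕ) ≤ n + 1 →
        ((x n / (k : ℝ) : ℝ) : AddCircle (1 : ℝ)) = α k := by
      intro k n hkn
      have hdvd : (k : ℕ) ∣ (N n : ℕ) := Nat.dvd_factorial k.pos hkn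
      obtain ⟨m0, hm0⟩ := hdvd
      have hm0pos : 0 < m0 := by
        rcases Nat.eq_zero_or_pos m0 with h | h
        · exfalso; have h2 := (N n).pos; rw [h, Nat.mul_zero] at hm0; omega
        · exact h
      set m : ℕ+ := ⟨m0, hm0pos⟩ with hm
      have hNn : N n = m * k := by
        apply PNat.coe_injective
        rw [PNat.mul_coe, hm0]
        simp [hm, Nat.mul_comm]
      have hreal : x n / (k : ℝ) = ((m : ℕ) : ℝ) * y (N n) := by
        have hk : ((k : ℕ) : ℝ) ≠ 0 := by exact_mod_cast k.ne_zero
        have hmk : (m : ℕ) = m0 := rfl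
        have : ((N n : ℕ) : ℝ) = ((k : ℕ) : ℝ) * ((m : ℕ) : ℝ) := by
          rw [hmk, ← Nat.cast_mul, hm0]
        rw [hx]
        simp only
        rw [this]
        field_simp
      rw [hreal]
      have : ((((m : ℕ) : ℝ) * y (N n) : ℝ) : AddCircle (1 : ℝ))
          = (m : ℕ) • ((y (N n) : ℝ) : AddCircle (1 : ℝ)) := by
            rw [← nsmul_eq_mul]; rfl
      rw [this, hy (N n)]
      have := hα m k
      rw [← hNn] at this
      exact this
    have htend : Filter.Tendsto
        (fun n : ℕ => (fun k : ℕ+ => ((x n / (k : ℝ) : ℝ) : AddCircle (1 : ℝ))))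
        Filter.atTop (nhds α) := by
      rw [tendsto_pi_nhds]
      intro k
      apply Filter.Tendsto.congr' (f₁ := fun _ : ℕ => α k)
      · filter_upwards [Filter.eventually_ge_atTop (k : ℕ)] with n hn
        exact (key k n (by omega)).symm
      · exact tendsto_const_nhds
    exact mem_closure_of_tendsto htend (Filter.Eventually.of_forall fun n => ⟨x n, rfl⟩)
end

section
/- Let η_k = 1/k for k ≥ 1. There exists β ∈ ∏_{k=1}^∞ ℝ/ℤ such that T_η(β) ∩ Ξ⁰ = ∅; that is, for every α ∈ T_η the sequence (β_k + α_k)_{k≥1} does not converge to 0 in ℝ/ℤ. -/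
/-- For `η_k = 1/k` (indexed by `k : ℕ+`), there exists `β ∈ ∏_{k≥1} ℝ/ℤ`
such that `T_η(β) ∩ Ξ⁰ = ∅`: for every `α` in the orbit closure `T_η`, the sequence
`(β_k + α_k)` does not converge to `0` in `ℝ/ℤ`. -/
theorem stmt_3 :
    ∃ β : ℕ+ → AddCircle (1 : ℝ),
      ∀ α ∈ closure (Set.range (fun x : ℝ =>
          (fun k : ℕ+ => ((x / (k : ℝ) : ℝ) : AddCircle (1 : ℝ))))),
        ¬ Filter.Tendsto (fun k : ℕ+ => β k + α k) Filter.atTop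
            (nhds (0 : AddCircle (1 : ℝ))) := by
  set c : AddCircle (1 : ℝ) := ((1/2 : ℝ) : AddCircle (1 : ℝ)) with hc
  have hnc : ‖c‖ = 1/2 := by
    rw [hc, AddCircle.norm_eq]; norm_num [round_eq]
  have hcc : c + c = 0 := by
    rw [hc, ← AddCircle.coe_add]; norm_num
  refine ⟨fun _ => c, fun α hα htend => ?_⟩
  rw [Metric.tendsto_atTop] at htend
  obtain ⟨K, hK⟩ := htend (1/16) (by norm_num)
  set M : ℕ+ := K + K with hM
  have hKM : K ≤ M := by rw [hM, ← PNat.coe_le_coe]; push_cast; omega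
  have hcont : Continuous (fun γ : ℕ+ → AddCircle (1:ℝ) => (γ K, γ M)) :=
    (continuous_apply K).prodMk (continuous_apply M)
  have hmem : (α K, α M) ∈ closure (Set.range (fun x : ℝ =>
      (((x / (K : ℝ) : ℝ) : AddCircle (1:ℝ)), ((x / (M : ℝ) : ℝ) : AddCircle (1:ℝ))))) := by
    have h1 : (α K, α M) ∈ (fun γ : ℕ+ → AddCircle (1:ℝ) => (γ K, γ M)) '' closure
        (Set.range (fun x : ℝ => (fun k : ℕ+ => ((x / (k : ℝ) : ℝ) : AddCircle (1 : ℝ))))) :=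
      ⟨α, hα, rfl⟩
    have h2 := image_closure_subset_closure_image (f := fun γ : ℕ+ → AddCircle (1:ℝ) => (γ K, γ M)) hcont h1
    refine closure_mono ?_ h2
    rintro _ ⟨_, ⟨x, rfl⟩, rfl⟩
    exact ⟨x, rfl⟩
  rw [Metric.mem_closure_iff] at hmem
  obtain ⟨_, ⟨x, rfl⟩, hd⟩ := hmem (1/16) (by norm_num)
  rw [Prod.dist_eq, max_lt_iff] at hd
  obtain ⟨hd1, hd2⟩ := hd
  simp only [dist_eq_norm] at hd1 hd2
  have h1 := hK K le_rfl
  have h2 := hK M hKM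
  rw [dist_eq_norm, sub_zero] at h1 h2
  set a : AddCircle (1:ℝ) := ((x / (K : ℝ) : ℝ) : AddCircle (1:ℝ)) with ha
  set b : AddCircle (1:ℝ) := ((x / (M : ℝ) : ℝ) : AddCircle (1:ℝ)) with hb
  have hMr : (M : ℝ) = (K : ℝ) + (K : ℝ) := by rw [hM]; push_cast; ring
  have hKne : (K : ℝ) ≠ 0 := by positivity
  have hab : a = b + b := by
    rw [ha, hb, ← AddCircle.coe_add]
    congr 1
    rw [hMr]; field_simp
  have e1 : ‖c + a‖ < 1/8 := by
    have : c + a = (c + α K) + (a - α K) := by abel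
    rw [this]
    calc ‖(c + α K) + (a - α K)‖ ≤ ‖c + α K‖ + ‖a - α K‖ := norm_add_le _ _
    _ < 1/8 := by rw [norm_sub_rev]; linarith
  have e2 : ‖c + b‖ < 1/8 := by
    have : c + b = (c + α M) + (b - α M) := by abel
    rw [this]
    calc ‖(c + α M) + (b - α M)‖ ≤ ‖c + α M‖ + ‖b - α M‖ := norm_add_le _ _
    _ < 1/8 := by rw [norm_sub_rev]; linarith
  have e3 : a = (c + b) + (c + b) := by
    rw [hab]
    have : (c + b) + (c + b) = (b + b) + (c + c) := by abel
    rw [this, hcc, add_zero]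
  have e4 : ‖a‖ < 1/4 := by
    rw [e3]
    calc ‖(c + b) + (c + b)‖ ≤ ‖c + b‖ + ‖c + b‖ := norm_add_le _ _
    _ < 1/4 := by linarith
  have e5 : ‖c‖ ≤ ‖c + a‖ + ‖a‖ := by
    have : c = (c + a) + (-a) := by abel
    calc ‖c‖ = ‖(c + a) + (-a)‖ := by rw [← this]
    _ ≤ ‖c + a‖ + ‖-a‖ := norm_add_le _ _
    _ = ‖c + a‖ + ‖a‖ := by rw [norm_neg]
  rw [hnc] at e5
  linarith
end

section
/- The zeros of P and Q are real and interlacing; equivalently, for every z ∈ ℂ with Im z > 0 one has P(z) ≠ 0 and Im(Q(z)/P(z)) ≥ 0. -/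
open Polynomial MeasureTheory intervalIntegral

lemma gap_aux {n : ℕ} (a b : Fin n → ℝ) (ha0 : ∀ j, 0 < a j) (hab : ∀ j, a j < b j)
    (hsep : ∀ j k : Fin n, j < k → b k < a j) (k : Fin n) {x : ℝ}
    (hx : x ∈ Set.Icc (a k) (b k)) :
    0 < x * ∏ j ∈ Finset.univ.erase k, ((x - a j) * (x - b j)) := by
  apply mul_pos (lt_of_lt_of_le (ha0 k) hx.1)
  apply Finset.prod_pos
  intro j hj
  have hjk : j ≠ k := Finset.ne_of_mem_erase hj
  rcases lt_or_gt_of_ne hjk with h | h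
  · have h1 : x < a j := lt_of_le_of_lt hx.2 (hsep j k h)
    have h2 : x < b j := h1.trans (hab j)
    nlinarith
  · have h1 : b j < x := lt_of_lt_of_le (hsep k j h) hx.1
    have h2 : a j < x := (hab j).trans h1
    nlinarith

lemma evalT_aux {n : ℕ} (a b : Fin n → ℝ) (T : Polynomial ℝ)
    (hT : T = X * ∏ j, (X - C (a j)) * (X - C (b j))) (k : Fin n) (x : ℝ) :
    -(T.eval x)
      = (x - a k) * (b k - x) * (x * ∏ j ∈ Finset.univ.erase k, ((x - a j) * (x - b j))) := by
  have h1 : T.eval x = x * ∏ j, ((x - a j) * (x - b j)) := by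
    simp [hT, eval_prod]
  rw [h1, ← Finset.mul_prod_erase Finset.univ _ (Finset.mem_univ k)]
  ring

lemma negT_pos_aux {n : ℕ} (a b : Fin n → ℝ) (ha0 : ∀ j, 0 < a j) (hab : ∀ j, a j < b j)
    (hsep : ∀ j k : Fin n, j < k → b k < a j) (T : Polynomial ℝ)
    (hT : T = X * ∏ j, (X - C (a j)) * (X - C (b j))) (k : Fin n) {x : ℝ}
    (hx : x ∈ Set.Ioo (a k) (b k)) : 0 < -(T.eval x) := by
  rw [evalT_aux a b T hT k x]
  exact mul_pos (mul_pos (sub_pos.2 hx.1) (sub_pos.2 hx.2))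
    (gap_aux a b ha0 hab hsep k ⟨hx.1.le, hx.2.le⟩)

lemma integrable_aux {n : ℕ} (a b : Fin n → ℝ) (ha0 : ∀ j, 0 < a j) (hab : ∀ j, a j < b j)
    (hsep : ∀ j k : Fin n, j < k → b k < a j) (T : Polynomial ℝ)
    (hT : T = X * ∏ j, (X - C (a j)) * (X - C (b j))) (k : Fin n) (R : Polynomial ℝ) :
    IntervalIntegrable (fun x => R.eval x / Real.sqrt (-(T.eval x))) volume (a k) (b k) := by
  have hAB : a k < b k := hab k
  -- lower bound for the complementary factor
  have hcont : Continuous (fun x : ℝ => x * ∏ j ∈ Finset.univ.erase k, ((x - a j) * (x - b j))) := by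
    apply continuous_id.mul
    apply continuous_finset_prod
    intro j _
    exact (continuous_id.sub continuous_const).mul (continuous_id.sub continuous_const)
  obtain ⟨x₀, hx₀m, hx₀⟩ := isCompact_Icc.exists_isMinOn (Set.nonempty_Icc.2 hAB.le)
    hcont.continuousOn
  set c := x₀ * ∏ j ∈ Finset.univ.erase k, ((x₀ - a j) * (x₀ - b j)) with hcdef
  have hcpos : 0 < c := gap_aux a b ha0 hab hsep k hx₀m
  have hcle : ∀ x ∈ Set.Icc (a k) (b k),
      c ≤ x * ∏ j ∈ Finset.univ.erase k, ((x - a j) * (x - b j)) :=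
    fun x hx => isMinOn_iff.mp hx₀ x hx
  -- upper bound for |R|
  obtain ⟨x₁, _, hx₁⟩ := isCompact_Icc.exists_isMaxOn (Set.nonempty_Icc.2 hAB.le)
    ((Polynomial.continuous R).abs.continuousOn)
  set M := |R.eval x₁| with hMdef
  have hMle : ∀ x ∈ Set.Icc (a k) (b k), |R.eval x| ≤ M := fun x hx => isMaxOn_iff.mp hx₁ x hx
  have hM0 : 0 ≤ M := le_trans (abs_nonneg _) (hMle (a k) ⟨le_refl _, hAB.le⟩)
  -- sqrt lower bound on the open interval
  have hsqrt : ∀ x ∈ Set.Ioo (a k) (b k),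
      Real.sqrt c * (Real.sqrt (x - a k) * Real.sqrt (b k - x)) ≤ Real.sqrt (-(T.eval x)) := by
    intro x hx
    have hxA : (0:ℝ) ≤ x - a k := by linarith [hx.1]
    have hBx : (0:ℝ) ≤ b k - x := by linarith [hx.2]
    have key : c * ((x - a k) * (b k - x)) ≤ -(T.eval x) := by
      rw [evalT_aux a b T hT k x]
      have h1 : c ≤ x * ∏ j ∈ Finset.univ.erase k, ((x - a j) * (x - b j)) :=
        hcle x ⟨hx.1.le, hx.2.le⟩
      nlinarith [mul_nonneg hxA hBx]
    calc Real.sqrt c * (Real.sqrt (x - a k) * Real.sqrt (b k - x))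
        = Real.sqrt (c * ((x - a k) * (b k - x))) := by
          rw [Real.sqrt_mul hcpos.le, Real.sqrt_mul hxA]
      _ ≤ Real.sqrt (-(T.eval x)) := Real.sqrt_le_sqrt key
  have hmeas : ∀ u v : ℝ, AEStronglyMeasurable
      (fun x => R.eval x / Real.sqrt (-(T.eval x))) (volume.restrict (Set.uIoc u v)) := by
    intro u v
    exact (Measurable.div (Polynomial.continuous R).measurable
      ((Real.continuous_sqrt.comp (Polynomial.continuous T).neg).measurable)).aestronglyMeasurable
  set m := (a k + b k) / 2 with hmdef
  have hAm : a k < m := by simp only [hmdef]; linarith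
  have hmB : m < b k := by simp only [hmdef]; linarith
  have hrpow_sqrt : ∀ y : ℝ, 0 ≤ y → y ^ (-(1/2) : ℝ) = (Real.sqrt y)⁻¹ := by
    intro y hy
    rw [Real.rpow_neg hy, Real.sqrt_eq_rpow]
  -- first half
  have h1 : IntervalIntegrable (fun x => R.eval x / Real.sqrt (-(T.eval x))) volume (a k) m := by
    set K : ℝ := M / (Real.sqrt c * Real.sqrt (b k - m)) with hKdef
    have hKg : IntervalIntegrable (fun x => K * (x - a k) ^ (-(1/2) : ℝ)) volume (a k) m := by
      have h0 : IntervalIntegrable (fun x : ℝ => x ^ (-(1/2):ℝ)) volume 0 (m - a k) :=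
        intervalIntegrable_rpow' (by norm_num)
      have h1 := (h0.comp_sub_right (a k)).const_mul K
      simpa using h1
    apply hKg.mono_fun' (hmeas _ _)
    rw [Set.uIoc_of_le hAm.le]
    apply MeasureTheory.ae_restrict_of_forall_mem measurableSet_Ioc
    intro x hx
    show ‖R.eval x / Real.sqrt (-(T.eval x))‖ ≤ K * (x - a k) ^ (-(1/2) : ℝ)
    have hxIoo : x ∈ Set.Ioo (a k) (b k) := ⟨hx.1, lt_of_le_of_lt hx.2 hmB⟩
    have hxA : (0:ℝ) < x - a k := by linarith [hx.1]
    have hBm : (0:ℝ) < b k - m := by linarith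
    have hD : Real.sqrt c * Real.sqrt (b k - m) * Real.sqrt (x - a k)
        ≤ Real.sqrt (-(T.eval x)) := by
      refine le_trans ?_ (hsqrt x hxIoo)
      have : Real.sqrt (b k - m) ≤ Real.sqrt (b k - x) := Real.sqrt_le_sqrt (by linarith [hx.2])
      have h2 : (0:ℝ) ≤ Real.sqrt c := Real.sqrt_nonneg _
      have h3 : (0:ℝ) ≤ Real.sqrt (x - a k) := Real.sqrt_nonneg _
      nlinarith [mul_le_mul_of_nonneg_left this (mul_nonneg h2 h3)]
    have hDpos : 0 < Real.sqrt c * Real.sqrt (b k - m) * Real.sqrt (x - a k) := by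
      have := Real.sqrt_pos.2 hcpos
      have := Real.sqrt_pos.2 hBm
      have := Real.sqrt_pos.2 hxA
      positivity
    have hnorm : ‖R.eval x / Real.sqrt (-(T.eval x))‖
        = |R.eval x| / Real.sqrt (-(T.eval x)) := by
      rw [Real.norm_eq_abs, abs_div, abs_of_nonneg (Real.sqrt_nonneg _)]
    rw [hnorm]
    have step : |R.eval x| / Real.sqrt (-(T.eval x))
        ≤ M / (Real.sqrt c * Real.sqrt (b k - m) * Real.sqrt (x - a k)) :=
      div_le_div₀ hM0 (hMle x ⟨hxIoo.1.le, hxIoo.2.le⟩) hDpos hD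
    refine step.trans (le_of_eq ?_)
    rw [hrpow_sqrt _ hxA.le, ← div_eq_mul_inv, hKdef, div_div]
  -- second half
  have h2 : IntervalIntegrable (fun x => R.eval x / Real.sqrt (-(T.eval x))) volume m (b k) := by
    set K : ℝ := M / (Real.sqrt c * Real.sqrt (m - a k)) with hKdef
    have hKg : IntervalIntegrable (fun x => K * (b k - x) ^ (-(1/2) : ℝ)) volume m (b k) := by
      have h0 : IntervalIntegrable (fun x : ℝ => x ^ (-(1/2):ℝ)) volume 0 (b k - m) :=
        intervalIntegrable_rpow' (by norm_num)
      have h1 := ((h0.comp_sub_left (b k)).const_mul K).symm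
      simpa using h1
    apply hKg.mono_fun' (hmeas _ _)
    rw [Set.uIoc_of_le hmB.le]
    apply MeasureTheory.ae_restrict_of_forall_mem measurableSet_Ioc
    intro x hx
    show ‖R.eval x / Real.sqrt (-(T.eval x))‖ ≤ K * (b k - x) ^ (-(1/2) : ℝ)
    rcases eq_or_lt_of_le hx.2 with hxB | hxB
    · -- x = b k : both sides vanish
      have hTB : T.eval (b k) = 0 := by
        have h3 := evalT_aux a b T hT k (b k)
        simp at h3
        linarith
      rw [hxB, hTB]
      simp [Real.zero_rpow (by norm_num : (-(1/2):ℝ) ≠ 0)]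
    · have hxIoo : x ∈ Set.Ioo (a k) (b k) := ⟨lt_trans hAm hx.1, hxB⟩
      have hBx : (0:ℝ) < b k - x := by linarith
      have hmA : (0:ℝ) < m - a k := by linarith
      have hD : Real.sqrt c * Real.sqrt (m - a k) * Real.sqrt (b k - x)
          ≤ Real.sqrt (-(T.eval x)) := by
        refine le_trans ?_ (hsqrt x hxIoo)
        have : Real.sqrt (m - a k) ≤ Real.sqrt (x - a k) := Real.sqrt_le_sqrt (by linarith [hx.1])
        have h2 : (0:ℝ) ≤ Real.sqrt c := Real.sqrt_nonneg _
        have h3 : (0:ℝ) ≤ Real.sqrt (b k - x) := Real.sqrt_nonneg _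
        nlinarith [mul_le_mul_of_nonneg_left this (mul_nonneg h2 h3)]
      have hDpos : 0 < Real.sqrt c * Real.sqrt (m - a k) * Real.sqrt (b k - x) := by
        have := Real.sqrt_pos.2 hcpos
        have := Real.sqrt_pos.2 hmA
        have := Real.sqrt_pos.2 hBx
        positivity
      have hnorm : ‖R.eval x / Real.sqrt (-(T.eval x))‖
          = |R.eval x| / Real.sqrt (-(T.eval x)) := by
        rw [Real.norm_eq_abs, abs_div, abs_of_nonneg (Real.sqrt_nonneg _)]
      rw [hnorm]
      have step : |R.eval x| / Real.sqrt (-(T.eval x))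
          ≤ M / (Real.sqrt c * Real.sqrt (m - a k) * Real.sqrt (b k - x)) :=
        div_le_div₀ hM0 (hMle x ⟨hxIoo.1.le, hxIoo.2.le⟩) hDpos hD
      refine step.trans (le_of_eq ?_)
      rw [hrpow_sqrt _ hBx.le, ← div_eq_mul_inv, hKdef, div_div]
  exact h1.trans h2

lemma root_aux {n : ℕ} (a b : Fin n → ℝ) (ha0 : ∀ j, 0 < a j) (hab : ∀ j, a j < b j)
    (hsep : ∀ j k : Fin n, j < k → b k < a j) (T : Polynomial ℝ)
    (hT : T = X * ∏ j, (X - C (a j)) * (X - C (b j))) (k : Fin n) (R : Polynomial ℝ)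
    (hi : ∫ x in (a k)..(b k), R.eval x / Real.sqrt (-(T.eval x)) = 0) :
    ∃ x ∈ Set.Ioo (a k) (b k), R.eval x = 0 := by
  by_contra hno
  push_neg at hno
  have hAB : a k < b k := hab k
  set m := (a k + b k) / 2 with hmdef
  have hm : m ∈ Set.Ioo (a k) (b k) := ⟨by simp only [hmdef]; linarith, by simp only [hmdef]; linarith⟩
  have hRm : R.eval m ≠ 0 := hno m hm
  have hsign : ∀ x ∈ Set.Ioo (a k) (b k), 0 < R.eval m * R.eval x := by
    intro x hx
    rcases lt_or_gt_of_ne (hno x hx) with hneg | hpos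
    · rcases lt_or_gt_of_ne hRm with hmneg | hmpos
      · exact mul_pos_of_neg_of_neg hmneg hneg
      · exfalso
        have hsub : Set.uIcc x m ⊆ Set.Ioo (a k) (b k) := by
          intro y hy
          rw [Set.mem_uIcc] at hy
          rcases hy with ⟨h1, h2⟩ | ⟨h1, h2⟩ <;>
            exact ⟨by linarith [hx.1, hm.1], by linarith [hx.2, hm.2]⟩
        have hcont : ContinuousOn (fun y => R.eval y) (Set.uIcc x m) :=
          (Polynomial.continuous R).continuousOn
        have h0 : (0:ℝ) ∈ Set.uIcc (R.eval x) (R.eval m) := by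
          rw [Set.mem_uIcc]
          left; exact ⟨hneg.le, hmpos.le⟩
        obtain ⟨y, hy, hy0⟩ := intermediate_value_uIcc hcont h0
        exact hno y (hsub hy) hy0
    · rcases lt_or_gt_of_ne hRm with hmneg | hmpos
      · exfalso
        have hsub : Set.uIcc x m ⊆ Set.Ioo (a k) (b k) := by
          intro y hy
          rw [Set.mem_uIcc] at hy
          rcases hy with ⟨h1, h2⟩ | ⟨h1, h2⟩ <;>
            exact ⟨by linarith [hx.1, hm.1], by linarith [hx.2, hm.2]⟩
        have hcont : ContinuousOn (fun y => R.eval y) (Set.uIcc x m) :=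
          (Polynomial.continuous R).continuousOn
        have h0 : (0:ℝ) ∈ Set.uIcc (R.eval x) (R.eval m) := by
          rw [Set.mem_uIcc]
          right; exact ⟨hmneg.le, hpos.le⟩
        obtain ⟨y, hy, hy0⟩ := intermediate_value_uIcc hcont h0
        exact hno y (hsub hy) hy0
      · exact mul_pos hmpos hpos
  rcases lt_or_gt_of_ne hRm with hmneg | hmpos
  · -- R < 0 on the gap: integral of -R is positive
    have hpos : (0:ℝ) < ∫ x in (a k)..(b k), (-R).eval x / Real.sqrt (-(T.eval x)) := by
      apply intervalIntegral_pos_of_pos_on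
        (integrable_aux a b ha0 hab hsep T hT k (-R))
      · intro x hx
        have h1 := hsign x hx
        have h2 : R.eval x < 0 := by nlinarith
        have h3 : 0 < Real.sqrt (-(T.eval x)) :=
          Real.sqrt_pos.2 (negT_pos_aux a b ha0 hab hsep T hT k hx)
        simp only [eval_neg]
        exact div_pos (by linarith) h3
      · exact hAB
    have : ∫ x in (a k)..(b k), (-R).eval x / Real.sqrt (-(T.eval x)) = 0 := by
      have heq : (fun x => (-R).eval x / Real.sqrt (-(T.eval x)))
          = fun x => -(R.eval x / Real.sqrt (-(T.eval x))) := by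
        funext x; simp [neg_div]
      rw [heq, intervalIntegral.integral_neg, hi, neg_zero]
    linarith
  · have hpos : (0:ℝ) < ∫ x in (a k)..(b k), R.eval x / Real.sqrt (-(T.eval x)) := by
      apply intervalIntegral_pos_of_pos_on (integrable_aux a b ha0 hab hsep T hT k R)
      · intro x hx
        have h1 := hsign x hx
        have h2 : 0 < R.eval x := by nlinarith
        have h3 : 0 < Real.sqrt (-(T.eval x)) :=
          Real.sqrt_pos.2 (negT_pos_aux a b ha0 hab hsep T hT k hx)
        positivity
      · exact hAB
    linarith

lemma no_nonreal_root_aux (n : ℕ) (S : Polynomial ℝ) (hS : S ≠ 0) (hdeg : S.natDegree ≤ n + 1)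
    (r : Fin n → ℝ) (hrinj : Function.Injective r) (hroots : ∀ k, S.eval (r k) = 0)
    (z : ℂ) (hz : z.im ≠ 0) (hz0 : (Polynomial.aeval z) S = 0) : False := by
  classical
  set Sc := S.map (algebraMap ℝ ℂ) with hScdef
  have hSc : Sc ≠ 0 := by
    rw [hScdef, Ne, Polynomial.map_eq_zero_iff (algebraMap ℝ ℂ).injective]
    exact hS
  have key : ∀ w : ℂ, (Polynomial.aeval w) S = 0 → w ∈ Sc.roots := by
    intro w hw
    rw [mem_roots hSc]
    show Sc.eval w = 0
    rw [hScdef, eval_map, ← aeval_def]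
    exact hw
  have hreal : ∀ x : ℝ, (Polynomial.aeval (x:ℂ)) S = ((S.eval x : ℝ) : ℂ) := by
    intro x
    exact Polynomial.aeval_algebraMap_apply_eq_algebraMap_eval x S
  set F : Finset ℂ :=
    insert z (insert ((starRingEnd ℂ) z) (Finset.univ.image fun k => ((r k : ℝ) : ℂ))) with hF
  have himages : ∀ w ∈ Finset.univ.image fun k : Fin n => ((r k : ℝ) : ℂ), w.im = 0 := by
    intro w hw
    simp only [Finset.mem_image] at hw
    obtain ⟨k, _, hk⟩ := hw
    rw [← hk]; exact Complex.ofReal_im _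
  have hzni : z ∉ insert ((starRingEnd ℂ) z) (Finset.univ.image fun k : Fin n => ((r k : ℝ) : ℂ)) := by
    simp only [Finset.mem_insert]
    rintro (h | h)
    · exact hz ((Complex.conj_eq_iff_im).mp h.symm)
    · exact hz (himages z h)
  have hcni : (starRingEnd ℂ) z ∉ Finset.univ.image fun k : Fin n => ((r k : ℝ) : ℂ) := by
    intro h
    have := himages _ h
    rw [Complex.conj_im] at this
    exact hz (by linarith)
  have hcard : F.card = n + 2 := by
    rw [hF, Finset.card_insert_of_notMem hzni, Finset.card_insert_of_notMem hcni,
      Finset.card_image_of_injective _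
        (show Function.Injective fun kk : Fin n => ((r kk : ℝ) : ℂ) from
          fun i j hij => hrinj (Complex.ofReal_injective hij)),
      Finset.card_univ, Fintype.card_fin]
  have hsub : F.val ⊆ Sc.roots := by
    intro w hw
    rw [Finset.mem_val, hF, Finset.mem_insert, Finset.mem_insert] at hw
    rcases hw with h | h | h
    · exact h ▸ key z hz0
    · subst h
      apply key
      rw [Polynomial.aeval_conj, hz0, map_zero]
    · simp only [Finset.mem_image] at h
      obtain ⟨k, _, hk⟩ := h
      subst hk
      apply key
      rw [hreal, hroots k, Complex.ofReal_zero]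
  have hle := Polynomial.card_le_degree_of_subset_roots hsub
  have : Sc.natDegree = S.natDegree := Polynomial.natDegree_map_eq_of_injective
    (algebraMap ℝ ℂ).injective S
  omega

lemma inj_aux {n : ℕ} (a b : Fin n → ℝ)
    (hsep : ∀ j k : Fin n, j < k → b k < a j) (p : Fin n → ℝ)
    (hpmem : ∀ k, p k ∈ Set.Ioo (a k) (b k)) : Function.Injective p := by
  intro j k e
  rcases lt_trichotomy j k with h | h | h
  · exfalso
    have h1 := (hpmem j).1
    have h2 := (hpmem k).2
    have h3 := hsep j k h
    rw [e] at h1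
    linarith
  · exact h
  · exfalso
    have h1 := (hpmem k).1
    have h2 := (hpmem j).2
    have h3 := hsep k j h
    rw [e] at h2
    linarith

/-- Lemma 4.3: The zeros of `P` and `Q` are real and interlacing;
equivalently, for every `z` in the upper half-plane, `P(z) ≠ 0` and
`Im (Q(z)/P(z)) ≥ 0`. -/
theorem stmt_5 (n : ℕ) (hn : 1 ≤ n) (a b : Fin n → ℝ)
    (ha0 : ∀ j, 0 < a j) (hab : ∀ j, a j < b j)
    (hsep : ∀ j k : Fin n, j < k → b k < a j)
    (T : Polynomial ℝ) (hT : T = X * ∏ j, (X - C (a j)) * (X - C (b j)))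
    (P : Polynomial ℝ) (hPmonic : P.Monic) (hPdeg : P.natDegree = n)
    (hPint : ∀ k, ∫ x in (a k)..(b k), P.eval x / Real.sqrt (-(T.eval x)) = 0)
    (P1 : Polynomial ℝ) (hP1monic : P1.Monic) (hP1deg : P1.natDegree = n)
    (Q : Polynomial ℝ) (hQ : Q = X * P1)
    (hQint : ∀ k, ∫ x in (a k)..(b k), Q.eval x / Real.sqrt (-(T.eval x)) = 0) :
    ∀ z : ℂ, 0 < z.im →
      (Polynomial.aeval z) P ≠ 0 ∧
      0 ≤ ((Polynomial.aeval z) Q / (Polynomial.aeval z) P).im := by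
  classical
  have hQmonic : Q.Monic := by rw [hQ]; exact monic_X.mul hP1monic
  have hQdeg : Q.natDegree = n + 1 := by
    rw [hQ, natDegree_mul X_ne_zero hP1monic.ne_zero, natDegree_X, hP1deg, add_comm]
  -- roots of P in the gaps
  have hProot : ∀ k, ∃ x ∈ Set.Ioo (a k) (b k), P.eval x = 0 :=
    fun k => root_aux a b ha0 hab hsep T hT k P (hPint k)
  choose p hpmem hproot using hProot
  have hPne : ∀ w : ℂ, w.im ≠ 0 → (Polynomial.aeval w) P ≠ 0 := by
    intro w hw hzero
    exact no_nonreal_root_aux n P hPmonic.ne_zero (by rw [hPdeg]; omega) p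
      (inj_aux a b hsep p hpmem) hproot w hw hzero
  -- linear combinations Q - t P have no nonreal roots
  have hcomb : ∀ (t : ℝ) (w : ℂ), w.im ≠ 0 → (Polynomial.aeval w) (Q - C t * P) ≠ 0 := by
    intro t
    have hint : ∀ k, ∫ x in (a k)..(b k),
        (Q - C t * P).eval x / Real.sqrt (-(T.eval x)) = 0 := by
      intro k
      have hQi := integrable_aux a b ha0 hab hsep T hT k Q
      have hPi := integrable_aux a b ha0 hab hsep T hT k P
      have heq : (fun x => (Q - C t * P).eval x / Real.sqrt (-(T.eval x)))
          = fun x => Q.eval x / Real.sqrt (-(T.eval x))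
            - t * (P.eval x / Real.sqrt (-(T.eval x))) := by
        funext x
        simp only [eval_sub, eval_mul, eval_C]
        rw [sub_div, mul_div_assoc]
      rw [heq, intervalIntegral.integral_sub hQi (hPi.const_mul t),
        intervalIntegral.integral_const_mul, hQint k, hPint k, mul_zero, sub_zero]
    have hdeg2 : (Q - C t * P).natDegree = n + 1 := by
      rw [natDegree_sub_eq_left_of_natDegree_lt, hQdeg]
      calc (C t * P).natDegree ≤ P.natDegree := natDegree_C_mul_le t P
        _ < Q.natDegree := by rw [hPdeg, hQdeg]; omega
    have hne2 : Q - C t * P ≠ 0 := fun h0 => by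
      rw [h0, natDegree_zero] at hdeg2; omega
    have hroot2 : ∀ k, ∃ x ∈ Set.Ioo (a k) (b k), (Q - C t * P).eval x = 0 :=
      fun k => root_aux a b ha0 hab hsep T hT k _ (hint k)
    choose q2 hq2mem hq2root using hroot2
    intro w hw hzero
    exact no_nonreal_root_aux n _ hne2 (le_of_eq hdeg2) q2
      (inj_aux a b hsep q2 hq2mem) hq2root w hw hzero
  -- the imaginary part of Q/P never vanishes off the real axis
  have hIm_ne : ∀ w : ℂ, w.im ≠ 0 →
      ((Polynomial.aeval w) Q / (Polynomial.aeval w) P).im ≠ 0 := by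
    intro w hw h0
    have hPw := hPne w hw
    set t := ((Polynomial.aeval w) Q / (Polynomial.aeval w) P).re with htdef
    have hQP : (Polynomial.aeval w) Q / (Polynomial.aeval w) P = (t : ℂ) := by
      apply Complex.ext
      · simp [htdef]
      · simp [h0]
    have hQw : (Polynomial.aeval w) Q = (t : ℂ) * (Polynomial.aeval w) P := by
      rw [← hQP, div_mul_cancel₀ _ hPw]
    apply hcomb t w hw
    rw [map_sub, map_mul, aeval_C, Complex.coe_algebraMap, hQw, sub_self]
  -- a point on the positive imaginary axis where Im(Q/P) > 0
  obtain ⟨y, hy0, hevalpos⟩ : ∃ y : ℝ, 0 < y ∧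
      0 < ((Polynomial.aeval (Complex.I * (y:ℂ))) Q
            / (Polynomial.aeval (Complex.I * (y:ℂ))) P).im := by
    set Pc := P.map (algebraMap ℝ ℂ) with hPc
    set Qc := Q.map (algebraMap ℝ ℂ) with hQc
    set G := Qc.comp (C Complex.I * X) * Pc.comp (C (-Complex.I) * X) with hG
    have hPcdeg : Pc.natDegree = n := by
      rw [hPc, Polynomial.natDegree_map_eq_of_injective (algebraMap ℝ ℂ).injective, hPdeg]
    have hQcdeg : Qc.natDegree = n + 1 := by
      rw [hQc, Polynomial.natDegree_map_eq_of_injective (algebraMap ℝ ℂ).injective, hQdeg]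
    have hI : (Complex.I : ℂ) ≠ 0 := Complex.I_ne_zero
    have hnI : (-Complex.I : ℂ) ≠ 0 := neg_ne_zero.2 Complex.I_ne_zero
    have hdc1 : (C Complex.I * X : Polynomial ℂ).natDegree = 1 := natDegree_C_mul_X _ hI
    have hdc2 : (C (-Complex.I) * X : Polynomial ℂ).natDegree = 1 := natDegree_C_mul_X _ hnI
    have hQccomp_deg : (Qc.comp (C Complex.I * X)).natDegree = n + 1 := by
      rw [natDegree_comp, hdc1, hQcdeg, mul_one]
    have hPccomp_deg : (Pc.comp (C (-Complex.I) * X)).natDegree = n := by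
      rw [natDegree_comp, hdc2, hPcdeg, mul_one]
    have hQlc : (Qc.comp (C Complex.I * X)).leadingCoeff = Complex.I ^ (n+1) := by
      rw [leadingCoeff_comp (by rw [hdc1]; omega), leadingCoeff_C_mul_X,
        (hQmonic.map (algebraMap ℝ ℂ)).leadingCoeff, one_mul, hQcdeg]
    have hPlc : (Pc.comp (C (-Complex.I) * X)).leadingCoeff = (-Complex.I) ^ n := by
      rw [leadingCoeff_comp (by rw [hdc2]; omega), leadingCoeff_C_mul_X,
        (hPmonic.map (algebraMap ℝ ℂ)).leadingCoeff, one_mul, hPcdeg]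
    have hGne1 : Qc.comp (C Complex.I * X) ≠ 0 :=
      leadingCoeff_ne_zero.1 (by rw [hQlc]; exact pow_ne_zero _ hI)
    have hGne2 : Pc.comp (C (-Complex.I) * X) ≠ 0 :=
      leadingCoeff_ne_zero.1 (by rw [hPlc]; exact pow_ne_zero _ hnI)
    have hGdeg : G.natDegree = 2*n+1 := by
      rw [hG, natDegree_mul hGne1 hGne2, hQccomp_deg, hPccomp_deg]; ring
    have hGlc : G.leadingCoeff = Complex.I := by
      rw [hG, leadingCoeff_mul, hQlc, hPlc, pow_succ, mul_assoc, mul_comm (Complex.I) ((-Complex.I)^n),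
        ← mul_assoc, ← mul_pow]
      simp [Complex.I_mul_I]
    have hGcoeff : G.coeff (2*n+1) = Complex.I := by
      rw [show 2*n+1 = G.natDegree from hGdeg.symm, coeff_natDegree, hGlc]
    set him : Polynomial ℝ := ∑ kk ∈ Finset.range (2*n+2), C ((G.coeff kk).im) * X ^ kk with hhim
    have hhimle : him.natDegree ≤ 2*n+1 := by
      rw [hhim]
      apply Polynomial.natDegree_sum_le_of_forall_le
      intro kk hkk
      refine le_trans (natDegree_C_mul_le _ _) ?_
      rw [natDegree_X_pow]
      exact Nat.lt_succ_iff.mp (Finset.mem_range.mp hkk)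
    have hhimc1 : him.coeff (2*n+1) = 1 := by
      rw [hhim, finset_sum_coeff]
      simp only [coeff_C_mul, coeff_X_pow, mul_ite, mul_one, mul_zero]
      rw [Finset.sum_ite_eq]
      simp [Finset.mem_range, hGcoeff]
    have hhimeval : ∀ y : ℝ, him.eval y = (G.eval ((y:ℝ):ℂ)).im := by
      intro y
      have hGev : G.eval ((y:ℝ):ℂ) = ∑ kk ∈ Finset.range (2*n+2), G.coeff kk * ((y:ℝ):ℂ) ^ kk :=
        G.eval_eq_sum_range' (by rw [hGdeg]; omega) _
      rw [hGev, Complex.im_sum, hhim, Polynomial.eval_finset_sum]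
      apply Finset.sum_congr rfl
      intro kk _
      simp [← Complex.ofReal_pow, Complex.mul_im]
    have hhimne : him ≠ 0 := fun h0 => by simp [h0] at hhimc1
    have hhimdeg : him.natDegree = 2*n+1 :=
      natDegree_eq_of_le_of_coeff_ne_zero hhimle (by rw [hhimc1]; norm_num)
    have hlcnn : (0:ℝ) ≤ him.leadingCoeff := by
      rw [Polynomial.leadingCoeff, hhimdeg, hhimc1]; norm_num
    have hdegpos : 0 < him.degree := by
      rw [degree_eq_natDegree hhimne, hhimdeg]
      exact_mod_cast Nat.succ_pos _
    have htend := Polynomial.tendsto_atTop_of_leadingCoeff_nonneg him hdegpos hlcnn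
    obtain ⟨y, hy⟩ := ((htend.eventually_gt_atTop 0).and (Filter.eventually_gt_atTop 0)).exists
    refine ⟨y, hy.2, ?_⟩
    have hw0im : ((Complex.I * (y:ℂ))).im = y := by simp
    have hPw0 : (Polynomial.aeval (Complex.I * (y:ℂ))) P ≠ 0 :=
      hPne _ (by rw [hw0im]; exact ne_of_gt hy.2)
    have hconjIy : (-Complex.I) * (y:ℂ) = (starRingEnd ℂ) (Complex.I * (y:ℂ)) := by
      simp [map_mul, Complex.conj_ofReal]
    have hGval : G.eval ((y:ℝ):ℂ)
        = (Polynomial.aeval (Complex.I * (y:ℂ))) Q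
          * (starRingEnd ℂ) ((Polynomial.aeval (Complex.I * (y:ℂ))) P) := by
      rw [hG, eval_mul, eval_comp, eval_comp]
      simp only [eval_mul, eval_C, eval_X]
      congr 1
      · rw [hQc, eval_map, ← aeval_def]
      · rw [hPc, eval_map, ← aeval_def, hconjIy, Polynomial.aeval_conj]
    have hdivim : ∀ u v : ℂ, (u / v).im = (u * (starRingEnd ℂ) v).im / Complex.normSq v := by
      intro u v
      rw [Complex.div_im, Complex.mul_im, Complex.conj_re, Complex.conj_im, Complex.normSq_apply]
      ring
    rw [hdivim, ← hGval, ← hhimeval y]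
    exact div_pos hy.1 (Complex.normSq_pos.2 hPw0)
  -- conclusion by a connectedness (intermediate value) argument
  intro z hz
  refine ⟨hPne z (ne_of_gt hz), ?_⟩
  by_contra hneg
  push_neg at hneg
  set w₀ : ℂ := Complex.I * (y:ℂ) with hw₀
  set γ : ℝ → ℂ := fun s => (1 - s) • z + s • w₀ with hγ
  have hγim : ∀ s ∈ Set.Icc (0:ℝ) 1, 0 < (γ s).im := by
    intro s hs
    have h1 : (γ s).im = (1-s) * z.im + s * y := by
      simp [hγ, Complex.add_im, Complex.smul_im, hw₀]
    rw [h1]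
    rcases eq_or_lt_of_le hs.1 with h | h
    · rw [← h]; simpa using hz
    · nlinarith [hs.2, mul_pos h hy0]
  have hγcont : Continuous γ := by
    rw [hγ]
    exact ((continuous_const.sub continuous_id).smul continuous_const).add
      (continuous_id.smul continuous_const)
  have hcontg : ContinuousOn
      (fun s => ((Polynomial.aeval (γ s)) Q / (Polynomial.aeval (γ s)) P).im)
      (Set.Icc (0:ℝ) 1) := by
    apply Complex.continuous_im.comp_continuousOn
    apply ContinuousOn.div
    · exact ((Polynomial.continuous_aeval Q).comp hγcont).continuousOn
    · exact ((Polynomial.continuous_aeval P).comp hγcont).continuousOn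
    · exact fun s hs => hPne (γ s) (ne_of_gt (hγim s hs))
  have hγ0 : γ 0 = z := by simp [hγ]
  have hγ1 : γ 1 = w₀ := by simp [hγ]
  have h0mem : (0:ℝ) ∈ Set.Icc
      (((Polynomial.aeval (γ 0)) Q / (Polynomial.aeval (γ 0)) P).im)
      (((Polynomial.aeval (γ 1)) Q / (Polynomial.aeval (γ 1)) P).im) := by
    constructor
    · rw [hγ0]; exact hneg.le
    · rw [hγ1]; exact hevalpos.le
  obtain ⟨s, hsmem, hs0⟩ := intermediate_value_Icc (by norm_num : (0:ℝ) ≤ 1) hcontg h0mem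
  exact hIm_ne (γ s) (ne_of_gt (hγim s hsmem)) hs0
end

section
/- For every κ ∈ ℝ, all complex roots of the polynomial Q - κP are real. -/
/-!
`Q - κP` has degree `n + 1` (its top coefficient is that of `Q = X·P¹`), and its integral
against the weight `1/√(-T)` vanishes over every gap `[a_k, b_k]`. On a gap the weight is
positive, and integrable because `T` has simple zeros at the endpoints, so `Q - κP` changes sign
and hence vanishes in each of the `n` disjoint gaps. A non-real root would come with its conjugate,
giving `n + 2` roots to a polynomial of degree `n + 1`.
-/

open Polynomial MeasureTheory intervalIntegral Set

theorem intervalIntegrable_inv_sqrt_sub_mul_sub {c d : ℝ} (hcd : c < d) :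
    IntervalIntegrable (fun x => (√((x - c) * (d - x)))⁻¹) volume c d := by
  have hL : 0 < d - c := sub_pos.2 hcd
  refine intervalIntegrable_deriv_of_nonneg
    (g := fun x => Real.arcsin ((2 * x - c - d) / (d - c))) (by fun_prop) (fun x hx => ?_)
    (fun x _ => inv_nonneg.2 (Real.sqrt_nonneg _))
  rw [min_eq_left hcd.le, max_eq_right hcd.le] at hx
  obtain ⟨hcx, hxd⟩ := hx
  have hy₁ : (2 * x - c - d) / (d - c) ≠ -1 := by
    rw [ne_eq, div_eq_iff hL.ne']; intro h; linarith
  have hy₂ : (2 * x - c - d) / (d - c) ≠ 1 := by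
    rw [ne_eq, div_eq_iff hL.ne']; intro h; linarith
  have hsq : 1 - ((2 * x - c - d) / (d - c)) ^ 2 = (2 / (d - c)) ^ 2 * ((x - c) * (d - x)) := by
    field_simp; ring
  have hderiv := (Real.hasDerivAt_arcsin hy₁ hy₂).comp x
    ((((hasDerivAt_id x).const_mul 2).sub_const c).sub_const d |>.div_const (d - c))
  refine hderiv.congr_deriv ?_
  rw [hsq, Real.sqrt_mul (by positivity), Real.sqrt_sq (by positivity)]
  field_simp

theorem intervalIntegrable_div_sqrt_sub_mul_sub_mul {c d : ℝ} (hcd : c < d) {g s : ℝ → ℝ}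
    (hg : Continuous g) (hs : Continuous s) (hs_pos : ∀ x ∈ Icc c d, 0 < s x) :
    IntervalIntegrable (fun x => g x / √((x - c) * (d - x) * s x)) volume c d := by
  obtain ⟨x₀, hx₀, hmin⟩ := isCompact_Icc.exists_isMinOn (nonempty_Icc.2 hcd.le) hs.continuousOn
  obtain ⟨x₁, -, hmax⟩ :=
    isCompact_Icc.exists_isMaxOn (nonempty_Icc.2 hcd.le) (continuous_abs.comp hg).continuousOn
  have hε : 0 < s x₀ := hs_pos x₀ hx₀
  refine ((intervalIntegrable_inv_sqrt_sub_mul_sub hcd).const_mul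
    (|g x₁| * (√(s x₀))⁻¹)).mono_fun
    (hg.measurable.div (by fun_prop)).aestronglyMeasurable ?_
  rw [uIoc_of_le hcd.le]
  filter_upwards [self_mem_ae_restrict measurableSet_Ioc] with x ⟨hcx, hxd⟩
  have hx : x ∈ Icc c d := ⟨hcx.le, hxd⟩
  have huv : 0 ≤ (x - c) * (d - x) := mul_nonneg (by linarith) (by linarith)
  have hsx : s x₀ ≤ s x := hmin hx
  have hgx : |g x| ≤ |g x₁| := hmax hx
  rw [Real.norm_eq_abs, Real.norm_eq_abs, abs_div, abs_of_nonneg (Real.sqrt_nonneg _),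
    Real.sqrt_mul huv, div_eq_mul_inv, mul_inv]
  calc |g x| * ((√((x - c) * (d - x)))⁻¹ * (√(s x))⁻¹)
      ≤ |g x₁| * ((√((x - c) * (d - x)))⁻¹ * (√(s x₀))⁻¹) := by gcongr
    _ = |g x₁| * (√(s x₀))⁻¹ * (√((x - c) * (d - x)))⁻¹ := by ring
    _ ≤ _ := le_abs_self _

theorem exists_eq_zero_of_integral_div_eq_zero {c d : ℝ} (hcd : c < d) {f w : ℝ → ℝ}
    (hf : ContinuousOn f (Icc c d)) (hw : ∀ x ∈ Ioo c d, 0 < w x)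
    (hint : IntervalIntegrable (fun x => f x / w x) volume c d)
    (h₀ : ∫ x in c..d, f x / w x = 0) : ∃ r ∈ Icc c d, f r = 0 := by
  by_contra! hne
  have hsign : (∀ x ∈ Icc c d, 0 < f x) ∨ ∀ x ∈ Icc c d, f x < 0 := by
    by_contra! h
    obtain ⟨⟨x, hx, hfx⟩, ⟨y, hy, hfy⟩⟩ := h
    obtain ⟨r, hr, hr₀⟩ := isPreconnected_Icc.intermediate_value hx hy hf ⟨hfx, hfy⟩
    exact hne r hr hr₀
  rcases hsign with hpos | hneg
  · refine (intervalIntegral_pos_of_pos_on hint (fun x hx => ?_) hcd).ne' h₀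
    exact div_pos (hpos x (Ioo_subset_Icc_self hx)) (hw x hx)
  · have := intervalIntegral_pos_of_pos_on (f := fun x => -(f x / w x)) hint.neg
      (fun x hx => ?_) hcd
    · rw [intervalIntegral.integral_neg, h₀, neg_zero] at this
      exact this.false
    exact neg_pos.2 (div_neg_of_neg_of_pos (hneg x (Ioo_subset_Icc_self hx)) (hw x hx))

theorem Polynomial.im_eq_zero_of_natDegree_le_card_add_one {f : ℝ[X]} (hf : f ≠ 0)
    {s : Finset ℝ} (hs : ∀ r ∈ s, f.eval r = 0) (hdeg : f.natDegree ≤ s.card + 1)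
    {z : ℂ} (hz : aeval z f = 0) : z.im = 0 := by
  by_contra hz_im
  set F := f.map (algebraMap ℝ ℂ)
  have hF : F ≠ 0 := Polynomial.map_ne_zero hf
  have mem_roots : ∀ w, aeval w f = 0 → w ∈ F.roots.toFinset := fun w hw => by
    rwa [Multiset.mem_toFinset, Polynomial.mem_roots hF, IsRoot, eval_map, ← aeval_def]
  have hreal : ∀ w ∈ s.image ((↑) : ℝ → ℂ), w.im = 0 := by simp
  have hz_conj : starRingEnd ℂ z ∉ s.image ((↑) : ℝ → ℂ) := fun h =>
    hz_im (by simpa using hreal _ h)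
  have hz_ne : z ∉ insert (starRingEnd ℂ z) (s.image ((↑) : ℝ → ℂ)) := by
    rw [Finset.mem_insert, not_or]
    exact ⟨fun h => hz_im (Complex.conj_eq_iff_im.1 h.symm), fun h => hz_im (hreal z h)⟩
  have hsub : insert z (insert (starRingEnd ℂ z) (s.image ((↑) : ℝ → ℂ))) ⊆
      F.roots.toFinset := by
    intro w hw
    simp only [Finset.mem_insert, Finset.mem_image] at hw
    rcases hw with rfl | rfl | ⟨r, hr, rfl⟩
    · exact mem_roots _ hz
    · exact mem_roots _ (by rw [aeval_conj, hz, map_zero])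
    · refine mem_roots _ ?_
      rw [← Complex.coe_algebraMap, aeval_algebraMap_apply_eq_algebraMap_eval, hs r hr, map_zero]
  have := (Finset.card_le_card hsub).trans
    ((Multiset.toFinset_card_le _).trans (card_roots' F))
  rw [Finset.card_insert_of_notMem hz_ne, Finset.card_insert_of_notMem hz_conj,
    Finset.card_image_of_injective _ Complex.ofReal_injective, natDegree_map] at this
  omega

section Gaps

variable {n : ℕ} {a b : Fin n → ℝ}

theorem neg_eval_X_mul_prod_eq (k : Fin n) (x : ℝ) :
    -(X * ∏ j, (X - C (a j)) * (X - C (b j))).eval x =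
      (x - a k) * (b k - x) * (x * ∏ j ∈ Finset.univ.erase k, (x - a j) * (x - b j)) := by
  simp only [eval_mul, eval_X, eval_prod, eval_sub, eval_C,
    ← Finset.mul_prod_erase Finset.univ _ (Finset.mem_univ k)]
  ring

theorem mul_prod_erase_sub_mul_sub_pos (ha₀ : ∀ j, 0 < a j) (hab : ∀ j, a j < b j)
    (hsep : ∀ j k : Fin n, j < k → b k < a j) (k : Fin n) :
    ∀ x ∈ Icc (a k) (b k), 0 < x * ∏ j ∈ Finset.univ.erase k, (x - a j) * (x - b j) := by
  intro x ⟨hax, hxb⟩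
  refine mul_pos ((ha₀ k).trans_le hax) (Finset.prod_pos fun j hj => ?_)
  rcases lt_or_gt_of_ne (Finset.ne_of_mem_erase hj) with hjk | hkj
  · have := hsep j k hjk
    exact mul_pos_of_neg_of_neg (by linarith) (by linarith [hab j])
  · have := hsep k j hkj
    exact mul_pos (by linarith [hab j]) (by linarith)

variable (ha₀ : ∀ j, 0 < a j) (hab : ∀ j, a j < b j) (hsep : ∀ j k : Fin n, j < k → b k < a j)
include ha₀ hab hsep

theorem intervalIntegrable_eval_div_sqrt_neg_eval (p : ℝ[X]) (k : Fin n) :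
    IntervalIntegrable (fun x => p.eval x / √(-(X * ∏ j, (X - C (a j)) * (X - C (b j))).eval x))
      volume (a k) (b k) := by
  simp_rw [neg_eval_X_mul_prod_eq k]
  exact intervalIntegrable_div_sqrt_sub_mul_sub_mul (hab k) p.continuous (by fun_prop)
    (mul_prod_erase_sub_mul_sub_pos ha₀ hab hsep k)

theorem exists_eval_eq_zero_of_integral_eq_zero (p : ℝ[X]) (k : Fin n)
    (h₀ : ∫ x in (a k)..(b k), p.eval x / √(-(X * ∏ j, (X - C (a j)) * (X - C (b j))).eval x) = 0) :
    ∃ r ∈ Icc (a k) (b k), p.eval r = 0 := by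
  refine exists_eq_zero_of_integral_div_eq_zero (hab k) p.continuous.continuousOn (fun x hx => ?_)
    (intervalIntegrable_eval_div_sqrt_neg_eval ha₀ hab hsep p k) h₀
  rw [neg_eval_X_mul_prod_eq k]
  have := mul_prod_erase_sub_mul_sub_pos ha₀ hab hsep k x (Ioo_subset_Icc_self hx)
  exact Real.sqrt_pos.2 (mul_pos (mul_pos (by linarith [hx.1]) (by linarith [hx.2])) this)

omit ha₀ hab hsep in
theorem injective_of_mem_Icc (hsep : ∀ j k : Fin n, j < k → b k < a j) {r : Fin n → ℝ}
    (hr : ∀ k, r k ∈ Icc (a k) (b k)) : Function.Injective r := by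
  intro j k hjk
  by_contra hne
  rcases lt_or_gt_of_ne hne with hlt | hgt
  · linarith [hsep j k hlt, (hr j).1, (hr k).2]
  · linarith [hsep k j hgt, (hr k).1, (hr j).2]

end Gaps

theorem stmt_6_general (n : ℕ) (a b : Fin n → ℝ)
    (ha0 : ∀ j, 0 < a j) (hab : ∀ j, a j < b j)
    (hsep : ∀ j k : Fin n, j < k → b k < a j)
    (T : Polynomial ℝ) (hT : T = X * ∏ j, (X - C (a j)) * (X - C (b j)))
    (P : Polynomial ℝ) (hPdeg : P.natDegree = n)
    (hPint : ∀ k, ∫ x in (a k)..(b k), P.eval x / Real.sqrt (-(T.eval x)) = 0)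
    (P1 : Polynomial ℝ) (hP1monic : P1.Monic) (hP1deg : P1.natDegree = n)
    (Q : Polynomial ℝ) (hQ : Q = X * P1)
    (hQint : ∀ k, ∫ x in (a k)..(b k), Q.eval x / Real.sqrt (-(T.eval x)) = 0) :
    ∀ κ : ℝ, ∀ z : ℂ, (Polynomial.aeval z) (Q - C κ * P) = 0 → z.im = 0 := by
  subst hT
  intro κ z hz
  have hcoeff : (Q - C κ * P).coeff (n + 1) = 1 := by
    rw [coeff_sub, coeff_C_mul, coeff_eq_zero_of_natDegree_lt (p := P) (by omega), hQ, coeff_X_mul,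
      ← hP1deg, hP1monic.coeff_natDegree, mul_zero, sub_zero]
  have hdeg : (Q - C κ * P).natDegree ≤ n + 1 := by
    refine (natDegree_sub_le _ _).trans (max_le ?_ ((natDegree_C_mul_le κ P).trans (by omega)))
    rw [hQ, natDegree_X_mul hP1monic.ne_zero, hP1deg]
  have hint : ∀ k, ∫ x in (a k)..(b k),
      (Q - C κ * P).eval x / √(-(X * ∏ j, (X - C (a j)) * (X - C (b j))).eval x) = 0 := by
    intro k
    simp only [eval_sub, eval_C_mul, sub_div, mul_div_assoc]
    rw [integral_sub (intervalIntegrable_eval_div_sqrt_neg_eval ha0 hab hsep Q k)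
      ((intervalIntegrable_eval_div_sqrt_neg_eval ha0 hab hsep P k).const_mul κ),
      intervalIntegral.integral_const_mul, hQint k, hPint k, mul_zero, sub_zero]
  choose r hr hr₀ using fun k => exists_eval_eq_zero_of_integral_eq_zero ha0 hab hsep _ k (hint k)
  refine im_eq_zero_of_natDegree_le_card_add_one (fun h => by simp [h] at hcoeff)
    (s := Finset.univ.image r) (by simpa using hr₀) ?_ hz
  rwa [Finset.card_image_of_injective _ (injective_of_mem_Icc hsep hr), Finset.card_univ,
    Fintype.card_fin]

/-- For every `κ ∈ ℝ`, all complex roots of `Q - κP` are real. -/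
theorem stmt_6 (n : ℕ) (hn : 1 ≤ n) (a b : Fin n → ℝ)
    (ha0 : ∀ j, 0 < a j) (hab : ∀ j, a j < b j)
    (hsep : ∀ j k : Fin n, j < k → b k < a j)
    (T : Polynomial ℝ) (hT : T = X * ∏ j, (X - C (a j)) * (X - C (b j)))
    (P : Polynomial ℝ) (hPmonic : P.Monic) (hPdeg : P.natDegree = n)
    (hPint : ∀ k, ∫ x in (a k)..(b k), P.eval x / Real.sqrt (-(T.eval x)) = 0)
    (P1 : Polynomial ℝ) (hP1monic : P1.Monic) (hP1deg : P1.natDegree = n)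
    (Q : Polynomial ℝ) (hQ : Q = X * P1)
    (hQint : ∀ k, ∫ x in (a k)..(b k), Q.eval x / Real.sqrt (-(T.eval x)) = 0) :
    ∀ κ : ℝ, ∀ z : ℂ, (Polynomial.aeval z) (Q - C κ * P) = 0 → z.im = 0 :=
  stmt_6_general n a b ha0 hab hsep T hT P hPdeg hPint P1 hP1monic hP1deg Q hQ hQint
end

section
/- Let ℰ_ρ = {x ∈ ℝ : x > 0 and |g_ρ(1/√x)| ≤ 1}. Then for every c > 0 the Lebesgue integral ∫_{ℰ_ρ ∩ (0,c)} λ^{-1} dλ is finite, while ∫_{ℰ_ρ ∩ (0,c)} λ^{-2} dλ = ∞. -/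
/-!
Substituting `x = 1 / μ²` turns the two integrals into `∫ 2 / μ dμ` and `∫ 2μ dμ` over the set of
`μ > 1 / √c` with `|g_ρ(μ)| ≤ 1`. For `μ = n + t` with `n = ⌊μ⌋` one has
`|g_ρ(μ)| = |cos (πt) - ρμ sin (πt)|`; for large `n` this is at most `1` only if `t ≤ 1 / (ρn)`,
and it is at most `1` whenever `t < β / (n + 1)` for a fixed `β > 0`. So near `n` the set is
squeezed between windows of length `≍ 1 / n`: the first integral is at most a constant plus
`∑ 2 / (ρn²) < ∞`, the second is at least `∑ β = ∞`.
-/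

open Real Set MeasureTheory

lemma abs_cos_sub_mul_sin_add_nat (A t : ℝ) (n : ℕ) :
    |cos (π * (t + n)) - A * sin (π * (t + n))| = |cos (π * t) - A * sin (π * t)| := by
  rw [mul_add, mul_comm π n, cos_add_nat_mul_pi, sin_add_nat_mul_pi, mul_left_comm, ← mul_sub,
    abs_mul, abs_pow, abs_neg, abs_one, one_pow, one_mul]

lemma abs_cos_sub_mul_sin_le_one {A θ : ℝ} (hA : 0 ≤ A) (hθ₀ : 0 ≤ θ) (hθ : θ ≤ π / 2)
    (hAθ : A * θ ≤ 1) : |cos θ - A * sin θ| ≤ 1 := by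
  have hsin : 0 ≤ sin θ := sin_nonneg_of_nonneg_of_le_pi hθ₀ (by linarith [pi_pos])
  have hcos : 0 ≤ cos θ := cos_nonneg_of_mem_Icc ⟨by linarith [pi_pos], hθ⟩
  have hAsin : A * sin θ ≤ 1 := (mul_le_mul_of_nonneg_left (sin_le hθ₀) hA).trans hAθ
  rw [abs_le]
  constructor <;> nlinarith [cos_le_one θ, mul_nonneg hA hsin]

lemma two_mul_le_sin_pi_mul {t : ℝ} (ht₀ : 0 ≤ t) (ht : t ≤ 1 / 2) : 2 * t ≤ sin (π * t) := by
  have := mul_le_sin (x := π * t) (by positivity) (by nlinarith [pi_pos])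
  rwa [← mul_assoc, div_mul_cancel₀ _ pi_ne_zero] at this

lemma mul_le_one_of_abs_cos_sub_mul_sin_le_one {A t : ℝ} (hA : π ^ 2 / 8 < A) (ht₀ : 0 ≤ t)
    (ht₁ : t < 1) (h : |cos (π * t) - A * sin (π * t)| ≤ 1) : A * t ≤ 1 := by
  rw [abs_le] at h
  rcases le_or_gt t (1 / 2) with ht | ht
  · nlinarith [two_mul_le_sin_pi_mul ht₀ ht, cos_le_one (π * t), pi_pos]
  · -- With `s = 1 - t`, `A sin (πs) ≤ 1 - cos (πs)` forces `2As ≤ (πs)² / 2`,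
    -- i.e. `A ≤ π² s / 4 < π² / 8`.
    set s := 1 - t with hs
    have hπt : π * t = π - π * s := by rw [hs]; ring
    have hjordan := two_mul_le_sin_pi_mul (t := s) (by linarith) (by linarith)
    have hcos := one_sub_sq_div_two_le_cos (x := π * s)
    rw [hπt, cos_pi_sub, sin_pi_sub] at h
    have hs₀ : 0 < s := by linarith
    have hs₁ : 0 < 1 / 2 - s := by linarith
    nlinarith [mul_le_mul_of_nonneg_left hjordan (by nlinarith [pi_pos] : (0 : ℝ) ≤ A), pi_pos,
      mul_pos (mul_pos pi_pos pi_pos) (mul_pos hs₀ hs₁)]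

lemma le_add_one_div_of_abs_cos_sub_mul_sin_le_one {ρ μ : ℝ} {n : ℕ} (hn : π ^ 2 / 8 < ρ * n)
    (hμ : μ ∈ Ico (n : ℝ) (n + 1)) (h : |cos (π * μ) - ρ * μ * sin (π * μ)| ≤ 1) :
    μ ≤ n + 1 / (ρ * n) := by
  obtain ⟨t, rfl⟩ : ∃ t, μ = t + n := ⟨μ - n, by ring⟩
  rw [abs_cos_sub_mul_sin_add_nat] at h
  have hρn : 0 < ρ * n := lt_trans (by positivity) hn
  have hρ : 0 < ρ := pos_of_mul_pos_left hρn (Nat.cast_nonneg n)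
  have ht₀ : 0 ≤ t := by linarith [hμ.1]
  have hA : π ^ 2 / 8 < ρ * (t + n) := hn.trans_le (by nlinarith)
  have hAt := mul_le_one_of_abs_cos_sub_mul_sin_le_one hA ht₀ (by linarith [hμ.2]) h
  rw [add_comm t, add_le_add_iff_left, le_div_iff₀ hρn]
  nlinarith

lemma abs_cos_sub_mul_sin_le_one_of_mem_Ico {ρ β μ : ℝ} {n : ℕ} (hρ : 0 ≤ ρ) (hβ : β ≤ 1 / 2)
    (hρβ : ρ * π * β ≤ 1) (hμ : μ ∈ Ico (n : ℝ) (n + β / (n + 1))) :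
    |cos (π * μ) - ρ * μ * sin (π * μ)| ≤ 1 := by
  obtain ⟨t, rfl⟩ : ∃ t, μ = t + n := ⟨μ - n, by ring⟩
  rw [abs_cos_sub_mul_sin_add_nat]
  have ht₀ : 0 ≤ t := by linarith [hμ.1]
  have htβ : t * (n + 1) ≤ β := by
    have := hμ.2
    rw [add_comm t, add_lt_add_iff_left, lt_div_iff₀ (by positivity)] at this
    exact this.le
  have ht : t ≤ 1 / 2 := by nlinarith
  refine abs_cos_sub_mul_sin_le_one (by positivity) (by positivity) (by nlinarith [pi_pos]) ?_
  calc ρ * (t + n) * (π * t) = ρ * π * t * (t + n) := by ring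
    _ ≤ ρ * π * t * (n + 1) := mul_le_mul_of_nonneg_left (by linarith) (by positivity)
    _ = ρ * π * (t * (n + 1)) := by ring
    _ ≤ 1 := le_trans (by gcongr) hρβ

lemma setLIntegral_Icc_two_div_le {a b : ℝ} (ha : 0 < a) :
    ∫⁻ μ in Icc a b, ENNReal.ofReal (2 / μ) ≤ ENNReal.ofReal (2 / a * (b - a)) := by
  calc ∫⁻ μ in Icc a b, ENNReal.ofReal (2 / μ)
      ≤ ∫⁻ _ in Icc a b, ENNReal.ofReal (2 / a) :=
        setLIntegral_mono measurable_const fun μ hμ =>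
          ENNReal.ofReal_le_ofReal (div_le_div_of_nonneg_left zero_le_two ha hμ.1)
    _ = ENNReal.ofReal (2 / a * (b - a)) := by
        rw [setLIntegral_const, Real.volume_Icc, ENNReal.ofReal_mul (by positivity)]

lemma ofReal_le_setLIntegral_Ico_two_mul {a b : ℝ} (ha : 0 ≤ a) :
    ENNReal.ofReal (2 * a * (b - a)) ≤ ∫⁻ μ in Ico a b, ENNReal.ofReal (2 * μ) :=
  calc ENNReal.ofReal (2 * a * (b - a)) = ∫⁻ _ in Ico a b, ENNReal.ofReal (2 * a) := by
        rw [setLIntegral_const, Real.volume_Ico, ENNReal.ofReal_mul (by positivity)]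
    _ ≤ ∫⁻ μ in Ico a b, ENNReal.ofReal (2 * μ) :=
        setLIntegral_mono (by fun_prop) fun μ hμ => ENNReal.ofReal_le_ofReal (by linarith [hμ.1])

lemma injOn_inv_sq : InjOn (fun μ : ℝ => (μ ^ 2)⁻¹) (Ioi 0) := fun _ ha _ hb h =>
  (sq_eq_sq₀ (le_of_lt ha) (le_of_lt hb)).mp (inv_injective h)

lemma lintegral_image_inv_sq {T : Set ℝ} (hT : MeasurableSet T) (hT₀ : T ⊆ Ioi 0)
    (F : ℝ → ENNReal) :
    ∫⁻ x in (fun μ => (μ ^ 2)⁻¹) '' T, F x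
      = ∫⁻ μ in T, ENNReal.ofReal (2 / μ ^ 3) * F (μ ^ 2)⁻¹ := by
  have hderiv : ∀ μ ∈ T, HasDerivWithinAt (fun μ : ℝ => (μ ^ 2)⁻¹) (-(2 / μ ^ 3)) T μ := by
    intro μ hμ
    have hμ₀ : μ ≠ 0 := (hT₀ hμ).ne'
    have h : HasDerivAt (fun μ : ℝ => (μ ^ 2)⁻¹) (-(↑2 * μ ^ (2 - 1)) / (μ ^ 2) ^ 2) μ :=
      (hasDerivAt_pow 2 μ).inv (pow_ne_zero 2 hμ₀)
    refine h.hasDerivWithinAt.congr_deriv ?_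
    field_simp
    ring
  rw [lintegral_image_eq_lintegral_abs_deriv_mul hT hderiv (injOn_inv_sq.mono hT₀)]
  refine setLIntegral_congr_fun hT fun μ hμ => ?_
  have : (0 : ℝ) < μ := hT₀ hμ
  rw [abs_neg, abs_of_pos (by positivity)]

lemma lintegral_image_inv_sq_inv {T : Set ℝ} (hT : MeasurableSet T) (hT₀ : T ⊆ Ioi 0) :
    ∫⁻ x in (fun μ => (μ ^ 2)⁻¹) '' T, ENNReal.ofReal x⁻¹ = ∫⁻ μ in T, ENNReal.ofReal (2 / μ) := by
  rw [lintegral_image_inv_sq hT hT₀]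
  refine setLIntegral_congr_fun hT fun μ hμ => ?_
  have : (0 : ℝ) < μ := hT₀ hμ
  rw [← ENNReal.ofReal_mul (by positivity)]
  congr 1
  field_simp

lemma lintegral_image_inv_sq_inv_sq {T : Set ℝ} (hT : MeasurableSet T) (hT₀ : T ⊆ Ioi 0) :
    ∫⁻ x in (fun μ => (μ ^ 2)⁻¹) '' T, ENNReal.ofReal (x ^ 2)⁻¹
      = ∫⁻ μ in T, ENNReal.ofReal (2 * μ) := by
  rw [lintegral_image_inv_sq hT hT₀]
  refine setLIntegral_congr_fun hT fun μ hμ => ?_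
  have : (0 : ℝ) < μ := hT₀ hμ
  rw [← ENNReal.ofReal_mul (by positivity)]
  congr 1
  field_simp

lemma setOf_inv_sqrt_inter_Ioo_eq_image (P : ℝ → Prop) {c : ℝ} (hc : 0 < c) :
    {x : ℝ | 0 < x ∧ P (1 / √x)} ∩ Ioo 0 c = (fun μ => (μ ^ 2)⁻¹) '' {μ | (√c)⁻¹ < μ ∧ P μ} := by
  ext x
  constructor
  · rintro ⟨⟨hx, hP⟩, -, hxc⟩
    refine ⟨1 / √x, ⟨?_, hP⟩, ?_⟩
    · rw [one_div]
      exact inv_strictAnti₀ (sqrt_pos.mpr hx) (sqrt_lt_sqrt hx.le hxc)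
    · dsimp only
      rw [div_pow, sq_sqrt hx.le, one_pow, one_div, inv_inv]
  · rintro ⟨μ, ⟨hμc, hP⟩, rfl⟩
    have hμ : 0 < μ := lt_trans (by positivity) hμc
    refine ⟨⟨by positivity, ?_⟩, by positivity, ?_⟩
    · rwa [sqrt_inv, sqrt_sq hμ.le, one_div, inv_inv]
    · rw [inv_lt_comm₀ (by positivity) hc, ← sq_sqrt (inv_nonneg.mpr hc.le), sqrt_inv]
      exact pow_lt_pow_left₀ hμc (by positivity) two_ne_zero

/-- The `μ > a` with `|g_ρ(μ)| ≤ 1`; `ℰ_ρ ∩ (0, c)` is the image of `spectralParams ρ (√c)⁻¹`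
under `μ ↦ 1 / μ²`. -/
def spectralParams (ρ a : ℝ) : Set ℝ :=
  {μ | a < μ ∧ |cos (π * μ) - ρ * μ * sin (π * μ)| ≤ 1}

lemma measurableSet_spectralParams (ρ a : ℝ) : MeasurableSet (spectralParams ρ a) :=
  measurableSet_Ioi.inter <| measurableSet_le
    (f := fun μ : ℝ => |cos (π * μ) - ρ * μ * sin (π * μ)|) (by fun_prop) measurable_const

lemma spectralParams_subset_Icc_union {ρ a : ℝ} {N : ℕ} (hN : π ^ 2 / 8 < ρ * N) :
    spectralParams ρ a ⊆
      Icc a N ∪ ⋃ k : ℕ, Icc ((k + N : ℕ) : ℝ) ((k + N : ℕ) + 1 / (ρ * (k + N : ℕ))) := by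
  rintro μ ⟨haμ, hμ⟩
  rcases le_or_gt μ N with hμN | hNμ
  · exact Or.inl ⟨haμ.le, hμN⟩
  have hNn : N ≤ ⌊μ⌋₊ := Nat.le_floor hNμ.le
  have hn : π ^ 2 / 8 < ρ * ⌊μ⌋₊ := by
    have hρ : 0 < ρ := pos_of_mul_pos_left (lt_trans (by positivity) hN) (Nat.cast_nonneg N)
    exact hN.trans_le (by gcongr)
  have hμn : μ ∈ Ico (⌊μ⌋₊ : ℝ) (⌊μ⌋₊ + 1) :=
    ⟨Nat.floor_le ((Nat.cast_nonneg N).trans hNμ.le), Nat.lt_floor_add_one μ⟩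
  refine Or.inr (mem_iUnion.mpr ⟨⌊μ⌋₊ - N, ?_⟩)
  rw [Nat.sub_add_cancel hNn]
  exact ⟨hμn.1, le_add_one_div_of_abs_cos_sub_mul_sin_le_one hn hμn hμ⟩

lemma summable_two_div_mul_one_div {ρ : ℝ} (N : ℕ) :
    Summable fun k : ℕ => 2 / ((k + N : ℕ) : ℝ) * (1 / (ρ * (k + N : ℕ))) := by
  have h := (summable_one_div_nat_pow.mpr one_lt_two).mul_left (2 / ρ)
  refine ((summable_nat_add_iff N).mpr h).congr fun k => ?_
  ring

lemma setLIntegral_spectralParams_two_div_lt_top {ρ a : ℝ} (hρ : 0 < ρ) (ha : 0 < a) :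
    ∫⁻ μ in spectralParams ρ a, ENNReal.ofReal (2 / μ) < ⊤ := by
  obtain ⟨N, hN⟩ := exists_nat_gt (π ^ 2 / 8 / ρ)
  rw [div_lt_iff₀' hρ] at hN
  set J : ℕ → Set ℝ := fun k => Icc ((k + N : ℕ) : ℝ) ((k + N : ℕ) + 1 / (ρ * (k + N : ℕ)))
  have hJ : ∀ k, ∫⁻ μ in J k, ENNReal.ofReal (2 / μ)
      ≤ ENNReal.ofReal (2 / ((k + N : ℕ) : ℝ) * (1 / (ρ * (k + N : ℕ)))) := by
    intro k
    have hkN : (0 : ℝ) < (k + N : ℕ) := by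
      have : (0 : ℝ) < N := pos_of_mul_pos_right (lt_trans (by positivity) hN) hρ.le
      exact this.trans_le (by gcongr; omega)
    have := setLIntegral_Icc_two_div_le (b := (k + N : ℕ) + 1 / (ρ * (k + N : ℕ))) hkN
    rwa [add_sub_cancel_left] at this
  calc ∫⁻ μ in spectralParams ρ a, ENNReal.ofReal (2 / μ)
      ≤ ∫⁻ μ in Icc a N ∪ ⋃ k, J k, ENNReal.ofReal (2 / μ) :=
        lintegral_mono_set (spectralParams_subset_Icc_union hN)
    _ ≤ (∫⁻ μ in Icc a N, ENNReal.ofReal (2 / μ)) + ∑' k, ∫⁻ μ in J k, ENNReal.ofReal (2 / μ) :=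
        (lintegral_union_le _ _ _).trans (add_le_add le_rfl (lintegral_iUnion_le _ _))
    _ ≤ ENNReal.ofReal (2 / a * (N - a))
          + ∑' k : ℕ, ENNReal.ofReal (2 / ((k + N : ℕ) : ℝ) * (1 / (ρ * (k + N : ℕ)))) :=
        add_le_add (setLIntegral_Icc_two_div_le ha) (ENNReal.tsum_le_tsum hJ)
    _ < ⊤ := by
        rw [← ENNReal.ofReal_tsum_of_nonneg (fun k => by positivity)
          (summable_two_div_mul_one_div N)]
        exact ENNReal.add_lt_top.mpr ⟨ENNReal.ofReal_lt_top, ENNReal.ofReal_lt_top⟩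

lemma setLIntegral_spectralParams_two_mul_eq_top {ρ : ℝ} (hρ : 0 ≤ ρ) (a : ℝ) :
    ∫⁻ μ in spectralParams ρ a, ENNReal.ofReal (2 * μ) = ⊤ := by
  obtain ⟨N, hN⟩ := exists_nat_gt a
  set β := 1 / (ρ * π + 2)
  have hβ₀ : 0 < β := by positivity
  have hβ : β ≤ 1 / 2 := one_div_le_one_div_of_le two_pos (by linarith [mul_nonneg hρ pi_pos.le])
  have hρβ : ρ * π * β ≤ 1 := by
    rw [← div_eq_mul_one_div, div_le_one (by positivity)]
    linarith
  set m : ℕ → ℕ := fun k => k + N + 1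
  have hm : ∀ k, (N : ℝ) + 1 ≤ m k := fun k => by simp [m]
  set I : ℕ → Set ℝ := fun k => Ico (m k : ℝ) (m k + β / (m k + 1))
  have hI : ∀ k, I k ⊆ spectralParams ρ a := fun k μ hμ =>
    ⟨by linarith [hμ.1, hm k],
      abs_cos_sub_mul_sin_le_one_of_mem_Ico hρ hβ hρβ hμ⟩
  have hI_sub : ∀ k, I k ⊆ Ico (m k : ℝ) (m k + 1) := fun k => by
    refine Ico_subset_Ico_right ?_
    have : β / (m k + 1) ≤ β := div_le_self hβ₀.le (by linarith [hm k, N.cast_nonneg (α := ℝ)])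
    linarith
  have hdisj : Pairwise (Function.onFun Disjoint I) :=
    ((pairwise_disjoint_Ico_intCast ℝ).comp_of_injective (f := fun k => (m k : ℤ))
      (fun _ _ h => by simpa [m] using h)).mono fun i j h =>
        h.mono (by simpa using hI_sub i) (by simpa using hI_sub j)
  have hI_ge : ∀ k, ENNReal.ofReal β ≤ ∫⁻ μ in I k, ENNReal.ofReal (2 * μ) := by
    intro k
    refine (ENNReal.ofReal_le_ofReal ?_).trans
      (ofReal_le_setLIntegral_Ico_two_mul (by positivity))
    have := hm k
    rw [add_sub_cancel_left, mul_div_assoc', le_div_iff₀ (by positivity)]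
    nlinarith
  refine top_le_iff.mp ?_
  calc ⊤ = ∑' _ : ℕ, ENNReal.ofReal β := (ENNReal.tsum_const_eq_top_of_ne_zero (by simpa)).symm
    _ ≤ ∑' k, ∫⁻ μ in I k, ENNReal.ofReal (2 * μ) := ENNReal.tsum_le_tsum hI_ge
    _ = ∫⁻ μ in ⋃ k, I k, ENNReal.ofReal (2 * μ) :=
        (lintegral_iUnion (fun _ => measurableSet_Ico) hdisj _).symm
    _ ≤ ∫⁻ μ in spectralParams ρ a, ENNReal.ofReal (2 * μ) := lintegral_mono_set (iUnion_subset hI)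

/-- Proposition 3.2, conditions (2.8)/(2.9) for `ℰ_ρ`: for
`g_ρ(μ) = cos(πμ) - ρμ sin(πμ)` and `ℰ_ρ = {x > 0 : |g_ρ(1/√x)| ≤ 1}`, for every
`c > 0` one has `∫_{ℰ_ρ ∩ (0,c)} λ⁻¹ dλ < ∞` while `∫_{ℰ_ρ ∩ (0,c)} λ⁻² dλ = ∞`. -/
theorem stmt_8 (ρ : ℝ) (hρ : 0 < ρ)
    (g : ℝ → ℝ)
    (hg : ∀ μ : ℝ, g μ = Real.cos (Real.pi * μ) - ρ * μ * Real.sin (Real.pi * μ))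
    (E : Set ℝ) (hE : E = {x : ℝ | 0 < x ∧ |g (1 / Real.sqrt x)| ≤ 1}) :
    ∀ c : ℝ, 0 < c →
      (∫⁻ x in E ∩ Set.Ioo 0 c, ENNReal.ofReal x⁻¹) < ⊤ ∧
      (∫⁻ x in E ∩ Set.Ioo 0 c, ENNReal.ofReal ((x ^ 2)⁻¹)) = ⊤ := by
  intro c hc
  obtain rfl : g = fun μ => cos (π * μ) - ρ * μ * sin (π * μ) := funext hg
  have hEc : E ∩ Ioo 0 c = (fun μ => (μ ^ 2)⁻¹) '' spectralParams ρ (√c)⁻¹ := by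
    rw [hE]
    exact setOf_inv_sqrt_inter_Ioo_eq_image (fun μ => |cos (π * μ) - ρ * μ * sin (π * μ)| ≤ 1) hc
  have hpos : spectralParams ρ (√c)⁻¹ ⊆ Ioi 0 := fun μ hμ => lt_trans (by positivity) hμ.1
  rw [hEc, lintegral_image_inv_sq_inv (measurableSet_spectralParams ρ _) hpos,
    lintegral_image_inv_sq_inv_sq (measurableSet_spectralParams ρ _) hpos]
  exact ⟨setLIntegral_spectralParams_two_div_lt_top hρ (by positivity),
    setLIntegral_spectralParams_two_mul_eq_top hρ.le _⟩
end

section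
/- For each integer k ≥ 1 put s_k = inf{μ ∈ ℝ : μ > k and |g_ρ(μ)| > 1}. Then k·(s_k - k) → 2/(πρ) as k → ∞. (This is the asymptotic location μ⁻_{k+1} ≈ k + 2/(πρk) of the gap edges of the set {|g_ρ| ≤ 1}.) -/
open Real Filter Set

/-- Auxiliary function: `φ ρ k t = ρ(k+t) sin(πt/2) - cos(πt/2)`. -/
noncomputable def stmt9phi (ρ : ℝ) (k : ℕ) (t : ℝ) : ℝ :=
  ρ * ((k : ℝ) + t) * Real.sin (Real.pi * t / 2) - Real.cos (Real.pi * t / 2)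

lemma stmt9phi_strictMonoOn {ρ : ℝ} (hρ : 0 < ρ) (k : ℕ) :
    StrictMonoOn (stmt9phi ρ k) (Set.Icc 0 1) := by
  intro a ha b hb hab
  obtain ⟨ha0, ha1⟩ := ha
  obtain ⟨hb0, hb1⟩ := hb
  have hπ := Real.pi_pos
  have hsa : 0 ≤ Real.sin (Real.pi * a / 2) := by
    apply Real.sin_nonneg_of_nonneg_of_le_pi <;> nlinarith
  have hsab : Real.sin (Real.pi * a / 2) < Real.sin (Real.pi * b / 2) := by
    apply Real.strictMonoOn_sin (by constructor <;> nlinarith)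
      (by constructor <;> nlinarith) (by nlinarith)
  have hcba : Real.cos (Real.pi * b / 2) ≤ Real.cos (Real.pi * a / 2) := by
    apply Real.cos_le_cos_of_nonneg_of_le_pi (by nlinarith) (by nlinarith) (by nlinarith)
  have hk : (0:ℝ) ≤ (k:ℝ) := Nat.cast_nonneg k
  unfold stmt9phi
  nlinarith [mul_le_mul_of_nonneg_right
    (show ρ * ((k:ℝ) + a) ≤ ρ * ((k:ℝ) + b) by nlinarith) hsa,
    mul_lt_mul_of_pos_left hsab (show 0 < ρ * ((k:ℝ) + b) by nlinarith)]

lemma stmt9phi_exists_root {ρ : ℝ} (hρ : 0 < ρ) (k : ℕ) :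
    ∃ t ∈ Set.Ioo (0:ℝ) 1, stmt9phi ρ k t = 0 := by
  have hc : ContinuousOn (stmt9phi ρ k) (Set.Icc 0 1) := by
    apply Continuous.continuousOn; unfold stmt9phi; fun_prop
  have h0 : stmt9phi ρ k 0 = -1 := by simp [stmt9phi]
  have h1 : stmt9phi ρ k 1 = ρ * ((k:ℝ) + 1) := by
    simp [stmt9phi, mul_one, Real.sin_pi_div_two, Real.cos_pi_div_two]
  have hk : (0:ℝ) ≤ (k:ℝ) := Nat.cast_nonneg k
  have hmem : (0:ℝ) ∈ Set.Ioo (stmt9phi ρ k 0) (stmt9phi ρ k 1) := by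
    rw [h0, h1]; constructor <;> nlinarith
  obtain ⟨t, ht, hteq⟩ := intermediate_value_Ioo (by norm_num : (0:ℝ) ≤ 1) hc hmem
  exact ⟨t, ht, hteq⟩

/-- The key identity: `h t + 1 = -2 cos(πt/2) * φ t` where `h t = cos πt - ρ(k+t) sin πt`. -/
lemma stmt9_h_identity (ρ : ℝ) (k : ℕ) (t : ℝ) :
    (Real.cos (Real.pi * t) - ρ * ((k:ℝ) + t) * Real.sin (Real.pi * t)) + 1 =
      -2 * Real.cos (Real.pi * t / 2) * stmt9phi ρ k t := by
  have h2 : Real.pi * t = 2 * (Real.pi * t / 2) := by ring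
  rw [h2, Real.cos_two_mul, Real.sin_two_mul]
  unfold stmt9phi; ring

/-- Lemma 7.2, gap edge asymptotics `μ⁻_{k+1} ≈ k + 2/(πρk)`: with
`g_ρ(μ) = cos(πμ) - ρμ sin(πμ)` and `s_k = inf{μ > k : |g_ρ(μ)| > 1}` for `k ≥ 1`,
one has `k (s_k - k) → 2/(πρ)` as `k → ∞`. -/
theorem stmt_9 (ρ : ℝ) (hρ : 0 < ρ)
    (g : ℝ → ℝ)
    (hg : ∀ μ : ℝ, g μ = Real.cos (Real.pi * μ) - ρ * μ * Real.sin (Real.pi * μ))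
    (s : ℕ → ℝ)
    (hs : ∀ k : ℕ, 1 ≤ k → s k = sInf {μ : ℝ | (k : ℝ) < μ ∧ 1 < |g μ|}) :
    Filter.Tendsto (fun k : ℕ => (k : ℝ) * (s k - (k : ℝ))) Filter.atTop
      (nhds (2 / (Real.pi * ρ))) := by
  have hπ := Real.pi_pos
  -- choose the root t k of φ
  choose t ht hroot using fun k => stmt9phi_exists_root hρ k
  -- For k ≥ 1, s k = k + t k.
  have hskey : ∀ k : ℕ, 1 ≤ k → s k = (k : ℝ) + t k := by
    intro k hk
    rw [hs k hk]
    set S : Set ℝ := {μ : ℝ | (k : ℝ) < μ ∧ 1 < |g μ|} with hS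
    obtain ⟨htk0, htk1⟩ := ht k
    -- |g (k + u)| = |cos πu - ρ(k+u) sin πu|
    have habs : ∀ u : ℝ, |g ((k:ℝ) + u)| =
        |Real.cos (Real.pi * u) - ρ * ((k:ℝ) + u) * Real.sin (Real.pi * u)| := by
      intro u
      rw [hg]
      have h1 : Real.pi * ((k:ℝ) + u) = Real.pi * u + (k:ℝ) * Real.pi := by ring
      rw [h1, Real.cos_add_nat_mul_pi, Real.sin_add_nat_mul_pi]
      rw [show (-1:ℝ)^k * Real.cos (Real.pi*u) - ρ * ((k:ℝ)+u) * ((-1:ℝ)^k * Real.sin (Real.pi*u))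
        = (-1:ℝ)^k * (Real.cos (Real.pi*u) - ρ * ((k:ℝ)+u) * Real.sin (Real.pi*u)) by ring]
      rw [abs_mul, abs_pow, abs_neg, abs_one, one_pow, one_mul]
    -- for u ∈ (0,1): φ u ≤ 0 → |h u| ≤ 1 ; φ u > 0 → |h u| > 1
    have hcospos : ∀ u : ℝ, u ∈ Set.Ioo (0:ℝ) 1 → 0 < Real.cos (Real.pi * u / 2) := by
      intro u hu
      apply Real.cos_pos_of_mem_Ioo
      constructor <;> [nlinarith [hu.1]; nlinarith [hu.2]]
    have hsinpos : ∀ u : ℝ, u ∈ Set.Ioo (0:ℝ) 1 → 0 < Real.sin (Real.pi * u) := by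
      intro u hu
      apply Real.sin_pos_of_pos_of_lt_pi <;> nlinarith [hu.1, hu.2]
    have hhlt1 : ∀ u : ℝ, u ∈ Set.Ioo (0:ℝ) 1 →
        Real.cos (Real.pi * u) - ρ * ((k:ℝ) + u) * Real.sin (Real.pi * u) < 1 := by
      intro u hu
      have := hsinpos u hu
      have hcle := Real.cos_le_one (Real.pi * u)
      have hk0 : (0:ℝ) < (k:ℝ) + u := by
        have : (0:ℝ) ≤ (k:ℝ) := Nat.cast_nonneg k
        nlinarith [hu.1]
      nlinarith [mul_pos (mul_pos hρ hk0) this]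
    -- lower bound: S ⊆ (k + t k, ∞)
    have hlb : ∀ μ ∈ S, (k:ℝ) + t k ≤ μ := by
      rintro μ ⟨hμk, hμg⟩
      by_contra hcon
      push_neg at hcon
      set u := μ - (k:ℝ) with hu
      clear_value u
      have hu0 : 0 < u := by simp [hu]; linarith
      have hule : u ≤ t k := by simp [hu]; linarith
      have hu1 : u < 1 := lt_of_le_of_lt hule htk1
      have huIoo : u ∈ Set.Ioo (0:ℝ) 1 := ⟨hu0, hu1⟩
      have hφle : stmt9phi ρ k u ≤ 0 := by
        rcases eq_or_lt_of_le hule with h | h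
        · rw [h, hroot k]
        · have := stmt9phi_strictMonoOn hρ k ⟨hu0.le, hu1.le⟩ ⟨htk0.le, htk1.le⟩ h
          rw [hroot k] at this; linarith
      -- then |g μ| ≤ 1
      have hge : -1 ≤ Real.cos (Real.pi * u) - ρ * ((k:ℝ) + u) * Real.sin (Real.pi * u) := by
        have hid := stmt9_h_identity ρ k u
        have hc := hcospos u huIoo
        nlinarith [mul_nonneg (show (0:ℝ) ≤ -stmt9phi ρ k u by linarith) hc.le]
      have hlt := hhlt1 u huIoo
      have : |g μ| ≤ 1 := by
        have : μ = (k:ℝ) + u := by simp [hu]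
        rw [this, habs u, abs_le]
        exact ⟨hge, hlt.le⟩
      linarith
    -- upper bound: (k + t k, k + 1) ⊆ S
    have hsub : Set.Ioo ((k:ℝ) + t k) ((k:ℝ) + 1) ⊆ S := by
      rintro μ ⟨h1, h2⟩
      set u := μ - (k:ℝ) with hu
      clear_value u
      have hu0 : t k < u := by simp [hu]; linarith
      have hu1 : u < 1 := by simp [hu]; linarith
      have huIoo : u ∈ Set.Ioo (0:ℝ) 1 := ⟨lt_trans htk0 hu0, hu1⟩
      have hφpos : 0 < stmt9phi ρ k u := by
        have := stmt9phi_strictMonoOn hρ k ⟨htk0.le, htk1.le⟩ ⟨huIoo.1.le, hu1.le⟩ hu0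
        rw [hroot k] at this; linarith
      have hid := stmt9_h_identity ρ k u
      have hc := hcospos u huIoo
      have hlt : Real.cos (Real.pi * u) - ρ * ((k:ℝ) + u) * Real.sin (Real.pi * u) < -1 := by
        nlinarith [mul_pos hc hφpos]
      refine ⟨by linarith [huIoo.1, show μ = (k:ℝ) + u by simp [hu]], ?_⟩
      have hμeq : μ = (k:ℝ) + u := by simp [hu]
      rw [hμeq, habs u]
      rw [abs_sub_comm]
      calc (1:ℝ) < ρ * ((k:ℝ) + u) * Real.sin (Real.pi * u) - Real.cos (Real.pi * u) := by
            linarith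
        _ ≤ |ρ * ((k:ℝ) + u) * Real.sin (Real.pi * u) - Real.cos (Real.pi * u)| := le_abs_self _
    -- conclude sInf S = k + t k
    have hne : S.Nonempty := ⟨(k:ℝ) + (t k + 1)/2, hsub ⟨by linarith, by linarith⟩⟩
    have hbdd : BddBelow S := ⟨(k:ℝ) + t k, hlb⟩
    apply le_antisymm
    · calc sInf S ≤ sInf (Set.Ioo ((k:ℝ) + t k) ((k:ℝ) + 1)) :=
            csInf_le_csInf hbdd (Set.nonempty_Ioo.2 (by linarith)) hsub
        _ = (k:ℝ) + t k := csInf_Ioo (by linarith)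
    · exact le_csInf hne hlb
  -- the arctan formula: t k = (2/π) * arctan (1/(ρ*(k + t k)))
  have htan : ∀ k : ℕ, t k = 2 / Real.pi * Real.arctan (1 / (ρ * ((k:ℝ) + t k))) := by
    intro k
    obtain ⟨htk0, htk1⟩ := ht k
    have hk0 : (0:ℝ) < (k:ℝ) + t k := by
      have : (0:ℝ) ≤ (k:ℝ) := Nat.cast_nonneg k; linarith
    have hx : Real.pi * t k / 2 ∈ Set.Ioo (-(Real.pi/2)) (Real.pi/2) := by
      constructor <;> nlinarith
    have hc : 0 < Real.cos (Real.pi * t k / 2) := Real.cos_pos_of_mem_Ioo hx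
    have hroot' := hroot k
    unfold stmt9phi at hroot'
    have hs0 : ρ * ((k:ℝ) + t k) * Real.sin (Real.pi * t k / 2) = Real.cos (Real.pi * t k / 2) := by
      linarith
    have htaneq : Real.tan (Real.pi * t k / 2) = 1 / (ρ * ((k:ℝ) + t k)) := by
      rw [Real.tan_eq_sin_div_cos]
      rw [div_eq_div_iff hc.ne' (by positivity)]
      linarith [hs0]
    have := Real.arctan_tan hx.1 hx.2
    rw [htaneq] at this
    field_simp at this ⊢
    linarith
  -- limit lemma
  have hlim : ∀ c : ℝ, 0 ≤ c → Filter.Tendsto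
      (fun k : ℕ => (k:ℝ) * (2 / Real.pi * Real.arctan (1 / (ρ * ((k:ℝ) + c)))))
      Filter.atTop (nhds (2 / (Real.pi * ρ))) := by
    intro c hc
    have hx0 : Filter.Tendsto (fun k : ℕ => 1 / (ρ * ((k:ℝ) + c))) Filter.atTop (nhds 0) := by
      apply Tendsto.div_atTop tendsto_const_nhds
      apply Filter.Tendsto.const_mul_atTop hρ
      exact Filter.tendsto_atTop_add_const_right _ c tendsto_natCast_atTop_atTop
    have hxne : ∀ᶠ k : ℕ in Filter.atTop, 1 / (ρ * ((k:ℝ) + c)) ≠ 0 := by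
      filter_upwards [Filter.eventually_ge_atTop 1] with k hk
      have : (1:ℝ) ≤ (k:ℝ) := by exact_mod_cast hk
      positivity
    have hslope : Filter.Tendsto (fun x : ℝ => Real.arctan x / x) (nhdsWithin 0 {0}ᶜ)
        (nhds 1) := by
      have hd := hasDerivAt_iff_tendsto_slope.mp (Real.hasDerivAt_arctan 0)
      norm_num at hd
      have heq : slope Real.arctan 0 = fun x : ℝ => Real.arctan x / x := by
        funext x; simp [slope_def_field]
      rwa [heq] at hd
    have h1 : Filter.Tendsto
        (fun k : ℕ => Real.arctan (1 / (ρ * ((k:ℝ) + c))) / (1 / (ρ * ((k:ℝ) + c))))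
        Filter.atTop (nhds 1) := by
      apply hslope.comp
      rw [tendsto_nhdsWithin_iff]
      exact ⟨hx0, hxne⟩
    have h2 : Filter.Tendsto (fun k : ℕ => (k:ℝ) / ((k:ℝ) + c)) Filter.atTop (nhds 1) :=
      tendsto_natCast_div_add_atTop c
    have h3 := (h1.mul h2).const_mul (2 / Real.pi * (1/ρ))
    rw [mul_one, mul_one] at h3
    have heq : 2 / Real.pi * (1/ρ) = 2 / (Real.pi * ρ) := by
      field_simp
    rw [heq] at h3
    apply h3.congr'
    filter_upwards [Filter.eventually_ge_atTop 1] with k hk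
    have hk1 : (1:ℝ) ≤ (k:ℝ) := by exact_mod_cast hk
    have hkc : (0:ℝ) < (k:ℝ) + c := by linarith
    have hρkc : (0:ℝ) < ρ * ((k:ℝ) + c) := by positivity
    field_simp
  -- squeeze
  have hge := hlim 1 zero_le_one
  have hle := hlim 0 le_rfl
  simp only [add_zero] at hle
  apply tendsto_of_tendsto_of_tendsto_of_le_of_le' hge hle
  · filter_upwards [Filter.eventually_ge_atTop 1] with k hk
    obtain ⟨htk0, htk1⟩ := ht k
    have hk1 : (1:ℝ) ≤ (k:ℝ) := by exact_mod_cast hk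
    rw [hskey k hk, htan k]
    have harg : 1 / (ρ * ((k:ℝ) + 1)) ≤ 1 / (ρ * ((k:ℝ) + t k)) := by
      apply one_div_le_one_div_of_le (by positivity)
      nlinarith
    have := Real.arctan_strictMono.monotone harg
    have h2π : (0:ℝ) < 2 / Real.pi := by positivity
    have : 2 / Real.pi * Real.arctan (1 / (ρ * ((k:ℝ) + 1))) ≤
        2 / Real.pi * Real.arctan (1 / (ρ * ((k:ℝ) + t k))) := by
      nlinarith
    have hkk : ((k:ℝ) + t k - (k:ℝ)) = t k := by ring
    rw [add_sub_cancel_left]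
    nlinarith
  · filter_upwards [Filter.eventually_ge_atTop 1] with k hk
    obtain ⟨htk0, htk1⟩ := ht k
    have hk1 : (1:ℝ) ≤ (k:ℝ) := by exact_mod_cast hk
    rw [hskey k hk, htan k]
    have harg : 1 / (ρ * ((k:ℝ) + t k)) ≤ 1 / (ρ * ((k:ℝ))) := by
      apply one_div_le_one_div_of_le (by positivity)
      nlinarith
    have := Real.arctan_strictMono.monotone harg
    have h2π : (0:ℝ) < 2 / Real.pi := by positivity
    rw [add_sub_cancel_left]
    have hmul := mul_le_mul_of_nonneg_left this (show (0:ℝ) ≤ (k:ℝ) * (2 / Real.pi) by positivity)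
    nlinarith [hmul]
end

section
/- For every integer k ≥ 1 one has |g_ρ(k)| = 1, and there exists ε > 0 such that |g_ρ(μ)| > 1 for all μ ∈ (k - ε, k) and |g_ρ(μ)| < 1 for all μ ∈ (k, k + ε). (Thus each positive integer k is exactly a right gap edge μ⁺_k = k of the set {|g_ρ| ≤ 1}.) -/
/-!
Shifting by the integer `k` only changes the sign of `cos (π μ)` and `sin (π μ)`, so near `k` we
have `|g_ρ(μ)| = |cos t - ρ μ sin t|` with `t = π (μ - k)`. For small `t < 0` the two terms add up
to more than `1`, because `ρ μ |sin t|` is of first order in `t` while `1 - cos t` is of second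
order; for small `t > 0` the first order term `ρ μ sin t` pushes the value below `1` but, being
small, not below `-1`.
-/

open Real Filter Topology

lemma abs_cos_sub_mul_sin_pi_mul_sub_int (c μ : ℝ) (n : ℤ) :
    |cos (π * μ) - c * sin (π * μ)| = |cos (π * (μ - n)) - c * sin (π * (μ - n))| := by
  have hμ : π * μ = π * (μ - n) + n * π := by ring
  rw [hμ, cos_add_int_mul_pi, sin_add_int_mul_pi, ← mul_assoc, mul_comm c, mul_assoc, ← mul_sub,
    abs_mul, abs_zpow, abs_neg, abs_one, one_zpow, one_mul]

lemma one_lt_cos_add_mul_sin {t c : ℝ} (ht : 0 < t) (ht1 : t ≤ 1) (htc : t ≤ c) :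
    1 < cos t + c * sin t := by
  have hcos : 1 - t ^ 2 / 2 ≤ cos t := one_sub_sq_div_two_le_cos
  have hsin : t - t ^ 3 / 6 < sin t := sin_gt_sub_cube ht
  have hsin_pos : 0 < sin t := sin_pos_of_pos_of_lt_pi ht (by linarith [pi_gt_three])
  have ht2 : t ^ 2 ≤ 1 := pow_le_one₀ ht.le ht1
  calc 1 < 1 - t ^ 2 / 2 + t * (t - t ^ 3 / 6) := by nlinarith [pow_pos ht 2]
    _ ≤ cos t + t * sin t := by gcongr
    _ ≤ cos t + c * sin t := by gcongr

lemma abs_cos_sub_mul_sin_lt_one {t c : ℝ} (ht : 0 < t) (ht1 : t ≤ 1) (hc : 0 < c)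
    (hct : c * t ≤ 1) : |cos t - c * sin t| < 1 := by
  have hcos_pos : 0 < cos t :=
    cos_pos_of_mem_Ioo ⟨by linarith [pi_gt_three], by linarith [pi_gt_three]⟩
  have hsin_pos : 0 < sin t := sin_pos_of_pos_of_lt_pi ht (by linarith [pi_gt_three])
  have hcsin : c * sin t ≤ 1 := (mul_le_mul_of_nonneg_left (sin_le ht.le) hc.le).trans hct
  rw [abs_lt]
  constructor
  · linarith
  · linarith [cos_le_one t, mul_pos hc hsin_pos]

/-- with `g_ρ(μ) = cos(πμ) - ρμ sin(πμ)`, every positive integer `k`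
satisfies `|g_ρ(k)| = 1` and is a right gap edge of `{|g_ρ| ≤ 1}`: for some `ε > 0`,
`|g_ρ| > 1` on `(k-ε, k)` and `|g_ρ| < 1` on `(k, k+ε)`. -/
theorem stmt_10 (ρ : ℝ) (hρ : 0 < ρ)
    (g : ℝ → ℝ)
    (hg : ∀ μ : ℝ, g μ = Real.cos (Real.pi * μ) - ρ * μ * Real.sin (Real.pi * μ)) :
    ∀ k : ℕ, 1 ≤ k →
      |g (k : ℝ)| = 1 ∧
      ∃ ε > (0 : ℝ),
        (∀ μ ∈ Set.Ioo ((k : ℝ) - ε) (k : ℝ), 1 < |g μ|) ∧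
        (∀ μ ∈ Set.Ioo (k : ℝ) ((k : ℝ) + ε), |g μ| < 1) := by
  intro k hk
  have hshift (μ : ℝ) : |g μ| = |cos (π * (μ - k)) - ρ * μ * sin (π * (μ - k))| := by
    rw [hg, abs_cos_sub_mul_sin_pi_mul_sub_int _ μ k, Int.cast_natCast]
  refine ⟨by simp [hshift], ?_⟩
  have hk : (0 : ℝ) < k := by exact_mod_cast hk
  have hnear : ∀ᶠ μ in 𝓝 (k : ℝ), (π * (k - μ) < 1 ∧ π * (k - μ) < ρ * μ) ∧
      (π * (μ - k) < 1 ∧ ρ * μ * (π * (μ - k)) < 1) := by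
    refine ((ContinuousAt.eventually_lt ?_ ?_ ?_).and (ContinuousAt.eventually_lt ?_ ?_ ?_)).and
      ((ContinuousAt.eventually_lt ?_ ?_ ?_).and (ContinuousAt.eventually_lt ?_ ?_ ?_)) <;>
    first | fun_prop | simp [hρ, hk]
  obtain ⟨ε, hε, hμε⟩ := Metric.eventually_nhds_iff.1 hnear
  have hdist {μ : ℝ} (h₁ : k - ε < μ) (h₂ : μ < k + ε) : dist μ k < ε := by
    rw [Real.dist_eq, abs_lt]
    constructor <;> linarith
  refine ⟨ε, hε, fun μ ⟨h₁, h₂⟩ => ?_, fun μ ⟨h₁, h₂⟩ => ?_⟩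
  · obtain ⟨⟨ht1, htc⟩, -⟩ := hμε (hdist h₁ (by linarith))
    have hneg : π * (μ - k) = -(π * (k - μ)) := by ring
    rw [hshift, hneg, cos_neg, sin_neg, mul_neg, sub_neg_eq_add]
    exact (one_lt_cos_add_mul_sin (by nlinarith [pi_pos]) ht1.le htc.le).trans_le (le_abs_self _)
  · obtain ⟨-, ht1, hct⟩ := hμε (hdist (by linarith) h₂)
    rw [hshift]
    exact abs_cos_sub_mul_sin_lt_one (by nlinarith [pi_pos]) ht1.le (mul_pos hρ (by linarith)) hct.le
end

section
/- Let z₀ ∈ ℂ with Im z₀ > 0, let F ∈ L²(σ) be complex-valued, and suppose ∫_ℝ F(λ)/(λ - z₀) dσ(λ) = 0. Define G(λ) = ((λ - z̄₀)/(λ - z₀))·F(λ). Then ∫_ℝ |G|² dσ = ∫_ℝ |F|² dσ, and for every z ∈ ℂ \ ℝ with z ≠ z₀, ∫_ℝ G(λ)/(λ - z) dσ(λ) = ((z - z̄₀)/(z - z₀)) · ∫_ℝ F(λ)/(λ - z) dσ(λ). (This is the de Branges division property of the spaces of Cauchy transforms used in Lemma 7.1.) -/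
/-!
Since `|λ - z̄₀| = |λ - z₀|` for real `λ`, the factor `(λ - z̄₀)/(λ - z₀)` is unimodular on `ℝ`,
which gives the isometry. For the Cauchy transform, partial fractions split
`(λ - z̄₀) / ((λ - z₀)(λ - z))` into multiples of `1/(λ - z₀)` and `1/(λ - z)`; the first
integrates against `F` to zero by hypothesis. All integrals converge because `1/(λ - w)` is
`O((1 + λ²)^{-1/2})` for non-real `w`, hence lies in `L²(σ)`, and Hölder applies.
-/

open MeasureTheory

namespace Complex

lemma ofReal_sub_ne_zero {w : ℂ} (hw : w.im ≠ 0) (t : ℝ) : (t : ℂ) - w ≠ 0 := by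
  intro h
  apply hw
  simpa using (congrArg im h).symm

lemma norm_ofReal_sub_sq (t : ℝ) (w : ℂ) : ‖(t : ℂ) - w‖ ^ 2 = (t - w.re) ^ 2 + w.im ^ 2 := by
  rw [← normSq_eq_norm_sq, normSq_apply]
  simp only [sub_re, sub_im, ofReal_re, ofReal_im]
  ring

lemma one_add_sq_le_mul_norm_ofReal_sub_sq {w : ℂ} (hw : w.im ≠ 0) (t : ℝ) :
    1 + t ^ 2 ≤ (1 + 2 * w.re ^ 2 + 2 * w.im ^ 2) / w.im ^ 2 * ‖(t : ℂ) - w‖ ^ 2 := by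
  have hb2 : 0 < w.im ^ 2 := by positivity
  rw [norm_ofReal_sub_sq, div_mul_eq_mul_div, le_div_iff₀ hb2]
  nlinarith [mul_nonneg hb2.le (sq_nonneg (t - 2 * w.re)),
    mul_nonneg (sq_nonneg w.re) (sq_nonneg (t - w.re)),
    mul_nonneg (sq_nonneg w.im) (sq_nonneg (t - w.re))]

lemma norm_inv_ofReal_sub_sq_le {w : ℂ} (hw : w.im ≠ 0) (t : ℝ) :
    ‖((t : ℂ) - w)⁻¹‖ ^ 2 ≤ (1 + 2 * w.re ^ 2 + 2 * w.im ^ 2) / w.im ^ 2 * (1 + t ^ 2)⁻¹ := by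
  have hd : 0 < ‖(t : ℂ) - w‖ ^ 2 := by
    have := ofReal_sub_ne_zero hw t
    positivity
  rw [norm_inv, inv_pow, ← div_eq_mul_inv, inv_eq_one_div,
    div_le_div_iff₀ hd (by positivity), one_mul]
  exact one_add_sq_le_mul_norm_ofReal_sub_sq hw t

lemma norm_ofReal_sub_conj_div_ofReal_sub {w : ℂ} (hw : w.im ≠ 0) (t : ℝ) :
    ‖((t : ℂ) - starRingEnd ℂ w) / ((t : ℂ) - w)‖ = 1 := by
  have hconj : (t : ℂ) - starRingEnd ℂ w = starRingEnd ℂ ((t : ℂ) - w) := by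
    rw [map_sub, conj_ofReal]
  rw [norm_div, hconj, RCLike.norm_conj, div_self (norm_ne_zero_iff.mpr (ofReal_sub_ne_zero hw t))]

end Complex

lemma sub_div_sub_mul_div_sub {K : Type*} [Field K] {a b c t : K} (x : K)
    (htb : t - b ≠ 0) (htc : t - c ≠ 0) (hbc : b ≠ c) :
    (t - a) / (t - b) * x / (t - c)
      = (b - a) / (b - c) * (x / (t - b)) + (c - a) / (c - b) * (x / (t - c)) := by
  have hbc' : b - c ≠ 0 := sub_ne_zero.mpr hbc
  have hcb' : c - b ≠ 0 := sub_ne_zero.mpr hbc.symm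
  field_simp
  ring

section CauchyTransform

variable {σ : Measure ℝ}

lemma integrable_inv_one_add_sq_of_lintegral_lt_top
    (hσ : (∫⁻ t : ℝ, ENNReal.ofReal ((1 + t ^ 2)⁻¹) ∂σ) < ⊤) :
    Integrable (fun t : ℝ => (1 + t ^ 2)⁻¹) σ := by
  refine ⟨(Continuous.inv₀ (by fun_prop) fun t => by positivity).aestronglyMeasurable, ?_⟩
  rwa [hasFiniteIntegral_iff_ofReal (.of_forall fun t => by positivity)]

lemma memLp_two_inv_ofReal_sub (hσ : (∫⁻ t : ℝ, ENNReal.ofReal ((1 + t ^ 2)⁻¹) ∂σ) < ⊤)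
    {w : ℂ} (hw : w.im ≠ 0) : MemLp (fun t : ℝ => ((t : ℂ) - w)⁻¹) 2 σ := by
  have hcont : Continuous fun t : ℝ => ((t : ℂ) - w)⁻¹ :=
    Continuous.inv₀ (by fun_prop) (Complex.ofReal_sub_ne_zero hw)
  rw [memLp_two_iff_integrable_sq_norm hcont.aestronglyMeasurable]
  refine ((integrable_inv_one_add_sq_of_lintegral_lt_top hσ).const_mul
    ((1 + 2 * w.re ^ 2 + 2 * w.im ^ 2) / w.im ^ 2)).mono'
    (hcont.norm.pow 2).aestronglyMeasurable (.of_forall fun t => ?_)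
  rw [Real.norm_of_nonneg (by positivity)]
  exact Complex.norm_inv_ofReal_sub_sq_le hw t

lemma MeasureTheory.MemLp.integrable_div_ofReal_sub
    (hσ : (∫⁻ t : ℝ, ENNReal.ofReal ((1 + t ^ 2)⁻¹) ∂σ) < ⊤)
    {F : ℝ → ℂ} (hF : MemLp F 2 σ) {w : ℂ} (hw : w.im ≠ 0) :
    Integrable (fun t : ℝ => F t / ((t : ℂ) - w)) σ :=
  hF.integrable_mul (memLp_two_inv_ofReal_sub hσ hw)

end CauchyTransform

/-- de Branges division property, Lemma 7.1: let `σ` be a positive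
Borel measure on `ℝ` with `∫ (1+λ²)⁻¹ dσ < ∞`, `z₀` in the upper half-plane,
`F ∈ L²(σ)` with `∫ F(λ)/(λ-z₀) dσ = 0`, and `G(λ) = ((λ-z̄₀)/(λ-z₀)) F(λ)`.  Then
`∫ |G|² dσ = ∫ |F|² dσ` and for every non-real `z ≠ z₀`,
`∫ G(λ)/(λ-z) dσ = ((z-z̄₀)/(z-z₀)) ∫ F(λ)/(λ-z) dσ`. -/
theorem stmt_14 (σ : Measure ℝ)
    (hσ : (∫⁻ t : ℝ, ENNReal.ofReal ((1 + t ^ 2)⁻¹) ∂σ) < ⊤)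
    (z₀ : ℂ) (hz₀ : 0 < z₀.im)
    (F : ℝ → ℂ) (hF : MemLp F 2 σ)
    (h0 : ∫ t : ℝ, F t / ((t : ℂ) - z₀) ∂σ = 0)
    (G : ℝ → ℂ)
    (hG : ∀ t : ℝ, G t = (((t : ℂ) - starRingEnd ℂ z₀) / ((t : ℂ) - z₀)) * F t) :
    (∫ t : ℝ, ‖G t‖ ^ 2 ∂σ = ∫ t : ℝ, ‖F t‖ ^ 2 ∂σ) ∧
    ∀ z : ℂ, z.im ≠ 0 → z ≠ z₀ →
      ∫ t : ℝ, G t / ((t : ℂ) - z) ∂σ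
        = ((z - starRingEnd ℂ z₀) / (z - z₀)) * ∫ t : ℝ, F t / ((t : ℂ) - z) ∂σ := by
  have hz₀ne : z₀.im ≠ 0 := hz₀.ne'
  refine ⟨integral_congr_ae (.of_forall fun t => ?_), fun z hz hzz₀ => ?_⟩
  · simp only [hG, norm_mul, Complex.norm_ofReal_sub_conj_div_ofReal_sub hz₀ne, one_mul]
  have hsplit : ∀ t : ℝ, G t / ((t : ℂ) - z)
      = (z₀ - starRingEnd ℂ z₀) / (z₀ - z) * (F t / ((t : ℂ) - z₀))
        + (z - starRingEnd ℂ z₀) / (z - z₀) * (F t / ((t : ℂ) - z)) := fun t => by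
    rw [hG]
    exact sub_div_sub_mul_div_sub _ (Complex.ofReal_sub_ne_zero hz₀ne t)
      (Complex.ofReal_sub_ne_zero hz t) hzz₀.symm
  rw [integral_congr_ae (.of_forall hsplit),
    integral_add ((hF.integrable_div_ofReal_sub hσ hz₀ne).const_mul _)
      ((hF.integrable_div_ofReal_sub hσ hz).const_mul _),
    integral_const_mul, integral_const_mul, h0, mul_zero, zero_add]
end

section
/- Suppose that n(x) → 0 as x ↑ 0 (limit along real x < 0) and that ∫_{[0,∞)} λ^{-2} dν(λ) < ∞. Then n(x)/x → ∫_{[0,∞)} λ^{-2} dν(λ) as x ↑ 0, and this limit is positive whenever ν ≠ 0. -/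
/-!
Lean's `(0 ^ 2)⁻¹ = 0`, so the finiteness of `∫ t⁻² dν` says nothing about an atom of `ν` at `0`;
that is excluded by `n(x) → 0` instead: an atom of mass `a` would add `a (-1/x - 1) → ∞` to the
nonnegative integral defining `n(x) - c` for `-1 < x < 0`.

Without an atom, `1/(t-x) - 1/(t+1) = 1/(t(t+1)) + x/(t(t-x))` for `ν`-a.e. `t`, so
`n(x) = K + x G(x)` with `G(x) = ∫ dν(t)/(t(t-x))`. Dominated convergence with majorant `t⁻²`
gives `G(x) → ∫ t⁻² dν` as `x ↑ 0`, hence `n(x) → K`, so `K = 0` and `n(x)/x = G(x)`.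
-/

open MeasureTheory Filter Set Topology

section

variable {α : Type*} [LinearOrder α] [MeasurableSpace α] {μ : Measure α} {a : α}

lemma ae_le_of_measure_Iio_eq_zero (h : μ (Iio a) = 0) : ∀ᵐ t ∂μ, a ≤ t := by
  rw [ae_iff]
  simp_rw [not_le]
  exact h

lemma ae_lt_of_measure_Iio_eq_zero (h : μ (Iio a) = 0) (ha : μ {a} = 0) : ∀ᵐ t ∂μ, a < t := by
  have hIic : μ (Iic a) = 0 := by
    rw [← Iio_union_right]
    exact measure_union_null h ha
  rw [ae_iff]
  simp_rw [not_lt]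
  exact hIic

end

section

variable {ν : Measure ℝ}

lemma abs_one_div_sub_sub_one_div_add_one_le {x t : ℝ} (hx : x < 0) (ht : 0 ≤ t) :
    |1 / (t - x) - 1 / (t + 1)| ≤ |1 + x| / min 1 (-x) * (1 + t ^ 2)⁻¹ := by
  have hm : 0 < min 1 (-x) := lt_min one_pos (by linarith)
  have hden : min 1 (-x) * (1 + t ^ 2) ≤ (t - x) * (t + 1) := by
    nlinarith [min_le_left 1 (-x), min_le_right 1 (-x), mul_nonneg ht (neg_nonneg.2 hx.le)]
  have heq : 1 / (t - x) - 1 / (t + 1) = (1 + x) / ((t - x) * (t + 1)) := by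
    field_simp [show t - x ≠ 0 by linarith, show t + 1 ≠ 0 by linarith]
    ring
  rw [heq, abs_div, abs_of_pos (show 0 < (t - x) * (t + 1) by nlinarith),
    ← div_eq_mul_inv, div_div]
  exact div_le_div_of_nonneg_left (abs_nonneg _) (by positivity) hden

lemma integrable_one_div_sub_sub_one_div_add_one (hν0 : ∀ᵐ t ∂ν, 0 ≤ t)
    (hI : Integrable (fun t : ℝ => (1 + t ^ 2)⁻¹) ν) {x : ℝ} (hx : x < 0) :
    Integrable (fun t : ℝ => 1 / (t - x) - 1 / (t + 1)) ν := by
  refine (hI.const_mul (|1 + x| / min 1 (-x))).mono' (by fun_prop) ?_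
  filter_upwards [hν0] with t ht
  exact abs_one_div_sub_sub_one_div_add_one_le hx ht

lemma abs_inv_mul_sub_le {x t : ℝ} (hx : x ≤ 0) (ht : 0 ≤ t) :
    |(t * (t - x))⁻¹| ≤ (t ^ 2)⁻¹ := by
  rcases ht.eq_or_lt with rfl | ht
  · simp
  rw [abs_inv, abs_of_pos (by nlinarith), sq]
  exact inv_anti₀ (by positivity) (by nlinarith)

lemma integrable_inv_mul_sub (hν0 : ∀ᵐ t ∂ν, 0 ≤ t)
    (hI : Integrable (fun t : ℝ => (t ^ 2)⁻¹) ν) {x : ℝ} (hx : x ≤ 0) :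
    Integrable (fun t : ℝ => (t * (t - x))⁻¹) ν :=
  hI.mono' (by fun_prop) (by filter_upwards [hν0] with t ht using abs_inv_mul_sub_le hx ht)

lemma tendsto_integral_inv_mul_sub (hν0 : ∀ᵐ t ∂ν, 0 ≤ t)
    (hI : Integrable (fun t : ℝ => (t ^ 2)⁻¹) ν) :
    Tendsto (fun x : ℝ => ∫ t, (t * (t - x))⁻¹ ∂ν) (𝓝[<] 0) (𝓝 (∫ t, (t ^ 2)⁻¹ ∂ν)) := by
  refine tendsto_integral_filter_of_dominated_convergence _
    (Eventually.of_forall fun x => by fun_prop) ?_ hI (ae_of_all _ fun t => ?_)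
  · filter_upwards [self_mem_nhdsWithin] with x hx
    filter_upwards [hν0] with t ht using abs_inv_mul_sub_le (le_of_lt hx) ht
  · rcases eq_or_ne t 0 with rfl | ht
    · simp
    · have : ContinuousAt (fun x : ℝ => (t * (t - x))⁻¹) 0 :=
        (by fun_prop : Continuous fun x : ℝ => t * (t - x)).continuousAt.inv₀ (by simpa using ht)
      simpa [sq] using this.tendsto.mono_left nhdsWithin_le_nhds

lemma measure_singleton_zero_eq_zero_of_tendsto (hν0 : ∀ᵐ t ∂ν, 0 ≤ t)
    (hint : ∀ x < 0, Integrable (fun t : ℝ => 1 / (t - x) - 1 / (t + 1)) ν)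
    (hlim : Tendsto (fun x : ℝ => x * ∫ t, (1 / (t - x) - 1 / (t + 1)) ∂ν) (𝓝[<] 0) (𝓝 0)) :
    ν {0} = 0 := by
  have hfinite : ν {0} ≠ ⊤ := by
    refine ne_top_of_le_ne_top ((hint (-1 / 2) (by norm_num)).measure_norm_ge_lt_top one_pos).ne
      (measure_mono fun t (ht : t = 0) => ?_)
    norm_num [ht]
  have hbound : ∀ x ∈ Ioo (-1 : ℝ) 0,
      ν.real {0} * (1 + x) ≤ -(x * ∫ t, (1 / (t - x) - 1 / (t + 1)) ∂ν) := by
    rintro x ⟨hx1, hx0⟩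
    have hnonneg : 0 ≤ᵐ[ν] fun t : ℝ => 1 / (t - x) - 1 / (t + 1) := by
      filter_upwards [hν0] with t ht
      simp only [Pi.zero_apply, sub_nonneg]
      exact one_div_le_one_div_of_le (by linarith) (by linarith)
    have hatom := setIntegral_le_integral (s := {0}) (hint x hx0) hnonneg
    rw [integral_singleton, smul_eq_mul] at hatom
    calc ν.real {0} * (1 + x) = -x * (ν.real {0} * (1 / (0 - x) - 1 / (0 + 1))) := by
          field_simp [hx0.ne]; ring
      _ ≤ -x * ∫ t, (1 / (t - x) - 1 / (t + 1)) ∂ν := by gcongr; linarith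
      _ = _ := by ring
  have hle : ν.real {0} ≤ 0 := by
    refine le_of_tendsto_of_tendsto (f := fun x : ℝ => ν.real {0} * (1 + x)) ?_
      (by simpa using hlim.neg) (eventually_of_mem (Ioo_mem_nhdsLT (by norm_num)) hbound)
    have hcont : Continuous fun x : ℝ => ν.real {0} * (1 + x) := by fun_prop
    exact (hcont.tendsto' 0 _ (by simp)).mono_left nhdsWithin_le_nhds
  exact (measureReal_eq_zero_iff hfinite).1 (hle.antisymm measureReal_nonneg)

lemma one_div_sub_sub_one_div_add_one_eq {x t : ℝ} (hx : x < 0) (ht : 0 < t) :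
    1 / (t - x) - 1 / (t + 1) = (t * (t + 1))⁻¹ + x * (t * (t - x))⁻¹ := by
  field_simp [show t - x ≠ 0 by linarith]
  ring

lemma integral_one_div_sub_sub_one_div_add_one (hpos : ∀ᵐ t ∂ν, 0 < t)
    (hI : Integrable (fun t : ℝ => (t ^ 2)⁻¹) ν) {x : ℝ} (hx : x < 0) :
    ∫ t, (1 / (t - x) - 1 / (t + 1)) ∂ν =
      ∫ t, (t * (t + 1))⁻¹ ∂ν + x * ∫ t, (t * (t - x))⁻¹ ∂ν := by
  have hν0 : ∀ᵐ t ∂ν, 0 ≤ t := hpos.mono fun t ht => ht.le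
  have hI₁ : Integrable (fun t : ℝ => (t * (t + 1))⁻¹) ν := by
    simpa using integrable_inv_mul_sub hν0 hI (x := -1) (by norm_num)
  rw [integral_congr_ae (hpos.mono fun t ht => one_div_sub_sub_one_div_add_one_eq hx ht),
    integral_add hI₁ ((integrable_inv_mul_sub hν0 hI hx.le).const_mul x), integral_const_mul]

lemma integral_inv_sq_pos (hpos : ∀ᵐ t ∂ν, 0 < t)
    (hI : Integrable (fun t : ℝ => (t ^ 2)⁻¹) ν) (hne : ν ≠ 0) :
    0 < ∫ t, (t ^ 2)⁻¹ ∂ν := by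
  rw [integral_pos_iff_support_of_nonneg (fun t => by positivity) hI]
  calc 0 < ν univ := Measure.measure_univ_pos.2 hne
    _ = ν (Ioi 0) := (measure_congr (ae_eq_univ.2 (mem_ae_iff.1 hpos))).symm
    _ ≤ _ := measure_mono fun t (ht : 0 < t) => by simp [ht.ne']

end

/-- Lemma 6.5, asymptotics (6.3): let `ν` be a positive Borel measure
supported on `[0,∞)` with `∫ (1+λ²)⁻¹ dν < ∞`, and for `x < 0` let
`n(x) = c + ∫ (1/(λ-x) - 1/(λ+1)) dν(λ)`.  If `n(x) → 0` as `x ↑ 0` and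
`∫ λ⁻² dν < ∞`, then `n(x)/x → ∫ λ⁻² dν` as `x ↑ 0`, and this limit is positive
whenever `ν ≠ 0`. -/
theorem stmt_15 (ν : Measure ℝ) (hsupp : ν (Set.Iio 0) = 0)
    (hν : (∫⁻ t : ℝ, ENNReal.ofReal ((1 + t ^ 2)⁻¹) ∂ν) < ⊤)
    (c : ℝ) (n : ℝ → ℝ)
    (hn : ∀ x < (0 : ℝ), n x = c + ∫ t : ℝ, (1 / (t - x) - 1 / (t + 1)) ∂ν)
    (hlim : Tendsto n (nhdsWithin 0 (Set.Iio 0)) (nhds 0))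
    (hfin : (∫⁻ t : ℝ, ENNReal.ofReal ((t ^ 2)⁻¹) ∂ν) < ⊤) :
    Tendsto (fun x : ℝ => n x / x) (nhdsWithin 0 (Set.Iio 0))
      (nhds (∫ t : ℝ, (t ^ 2)⁻¹ ∂ν)) ∧
    (ν ≠ 0 → 0 < ∫ t : ℝ, (t ^ 2)⁻¹ ∂ν) := by
  have hν0 : ∀ᵐ t ∂ν, 0 ≤ t := ae_le_of_measure_Iio_eq_zero hsupp
  have hI₁ : Integrable (fun t : ℝ => (1 + t ^ 2)⁻¹) ν :=
    (lintegral_ofReal_ne_top_iff_integrable (by fun_prop) (ae_of_all _ fun t => by positivity)).1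
      hν.ne
  have hI₂ : Integrable (fun t : ℝ => (t ^ 2)⁻¹) ν :=
    (lintegral_ofReal_ne_top_iff_integrable (by fun_prop) (ae_of_all _ fun t => by positivity)).1
      hfin.ne
  have hid : Tendsto (fun x : ℝ => x) (𝓝[<] 0) (𝓝 0) := tendsto_nhdsWithin_of_tendsto_nhds tendsto_id
  have hatom : ν {0} = 0 := by
    refine measure_singleton_zero_eq_zero_of_tendsto hν0
      (fun x hx => integrable_one_div_sub_sub_one_div_add_one hν0 hI₁ hx) ?_
    have hlim' : Tendsto (fun x => x * (n x - c)) (𝓝[<] 0) (𝓝 0) := by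
      simpa using hid.mul (hlim.sub_const c)
    refine hlim'.congr' ?_
    filter_upwards [self_mem_nhdsWithin] with x hx
    rw [hn x hx, add_sub_cancel_left]
  have hpos : ∀ᵐ t ∂ν, 0 < t := ae_lt_of_measure_Iio_eq_zero hsupp hatom
  set K := c + ∫ t, (t * (t + 1))⁻¹ ∂ν
  have hnK : n =ᶠ[𝓝[<] 0] fun x => K + x * ∫ t, (t * (t - x))⁻¹ ∂ν := by
    filter_upwards [self_mem_nhdsWithin] with x hx
    rw [hn x hx, integral_one_div_sub_sub_one_div_add_one hpos hI₂ hx, add_assoc]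
  have hG := tendsto_integral_inv_mul_sub hν0 hI₂
  have hK : K = 0 := by
    have hKlim : Tendsto (fun x => K + x * ∫ t, (t * (t - x))⁻¹ ∂ν) (𝓝[<] 0) (𝓝 K) := by
      simpa using tendsto_const_nhds.add (hid.mul hG)
    exact tendsto_nhds_unique (hKlim.congr' hnK.symm) hlim
  refine ⟨hG.congr' ?_, integral_inv_sq_pos hpos hI₂⟩
  filter_upwards [hnK, self_mem_nhdsWithin] with x hnx hx
  rw [hnx, hK, zero_add, mul_div_cancel_left₀ _ hx.ne]
end
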